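/- arXiv:1606.02247 — 7 statements merged into one kernel-verified Lean document; each statement's English description precedes it below -/
import Mathlib

section
/- Let m ≥ 2, n = m(m−1)/2, and let (a_1, …, a_n) be any enumeration of the set of transvections {s_{i,j} : 1 ≤ i < j ≤ m} that is a Mal'cev basis of UT_m(ℤ). Then the Nickel module of UT_m(ℤ) with respect to (a_1, …, a_n), i.e., the ℚ-linear span of {g • t_k : g ∈ UT_m(ℤ), 1 ≤ k ≤ n}, has ℚ-dimension at most 3^m. -/
/-!
For `i ≤ j`, let `chainSpan i j` be the span of the chain monomials
`h ↦ h_{i₁j₁} h_{i₂j₂} ⋯ h_{i_rj_r}` with `i ≤ i₁ < j₁ ≤ i₂ < j₂ ≤ ⋯ < j_r ≤ j`.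
Since `(hg)_{pq} = ∑_{p ≤ l ≤ q} h_{pl} g_{lq}`, these spaces are invariant under right
translation. Expanding `a₁^{x₁} ⋯ aₙ^{xₙ}` shows that `h_{ij}` is the sum, over the paths
`i → j` through the pairs `(i_k, j_k)` of the basis in basis order, of the products of the
corresponding coordinates of `h`; the only path of length one is the coordinate of `s_{i,j}`
itself, and the others only involve pairs of smaller width. Induction on `j - i` therefore puts
the coordinate of `s_{i,j}` into `chainSpan i j`, so the Nickel module lies in `chainSpan 1 m`.
A chain is determined by how often (0, 1 or 2 times) each index occurs in it, which gives at
most `3^m` chain monomials.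
-/

open scoped TensorProduct

/-- diagonal entries of a product of two upper triangular matrices -/
private lemma diag_mul_triangular {m : ℕ} {A B : Matrix (Fin m) (Fin m) ℤ}
    (hA : ∀ i j : Fin m, j < i → A i j = 0) (hB : ∀ i j : Fin m, j < i → B i j = 0)
    (i : Fin m) : (A * B) i i = A i i * B i i := by
  rw [Matrix.mul_apply]
  apply Finset.sum_eq_single
  · intro k _ hk
    rcases lt_or_gt_of_ne hk with h | h
    · rw [hA i k h, zero_mul]
    · rw [hB k i h, mul_zero]
  · intro h; exact absurd (Finset.mem_univ i) h

/-- The group of upper unitriangular `m × m` integer matrices, as a subgroup of the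
units of the matrix ring. -/
def UT (m : ℕ) : Subgroup (Matrix (Fin m) (Fin m) ℤ)ˣ where
  carrier := {A | (∀ i j : Fin m, j < i → A.val i j = 0) ∧ ∀ i : Fin m, A.val i i = 1}
  one_mem' := by
    refine ⟨fun i j hji => ?_, fun i => ?_⟩
    · simp [Matrix.one_apply, (ne_of_lt hji).symm]
    · simp
  mul_mem' := by
    rintro A B ⟨hA1, hA2⟩ ⟨hB1, hB2⟩
    refine ⟨fun i j hji => ?_, fun i => ?_⟩
    · rw [Units.val_mul, Matrix.mul_apply]
      apply Finset.sum_eq_zero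
      intro k _
      rcases lt_or_ge k i with h | h
      · rw [hA1 i k h, zero_mul]
      · rw [hB1 k j (lt_of_lt_of_le hji h), mul_zero]
    · rw [Units.val_mul, diag_mul_triangular hA1 hB1, hA2, hB2, one_mul]
  inv_mem' := by
    rintro A ⟨hA1, hA2⟩
    have hinv : ∀ i j : Fin m, j < i → (A⁻¹).val i j = 0 := by
      haveI : Invertible A.val := A.isUnit.invertible
      have h1 : Matrix.BlockTriangular A.val (id : Fin m → Fin m) := fun i j h => hA1 i j h
      have h2 := Matrix.blockTriangular_inv_of_blockTriangular h1
      intro i j hji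
      rw [Matrix.coe_units_inv]
      exact h2 hji
    refine ⟨hinv, fun i => ?_⟩
    have h3 : ((A⁻¹).val * A.val) i i = (A⁻¹).val i i * A.val i i :=
      diag_mul_triangular hinv hA1 i
    rw [Units.inv_mul] at h3
    rw [hA2] at h3
    simpa [Matrix.one_apply] using h3.symm

/-- The transvection `s_{i,j} = 1 + E_{i,j}` as an element of `UT m`. -/
def sUT {m : ℕ} (i j : Fin m) (hij : i < j) : ↥(UT m) :=
  ⟨⟨Matrix.transvection i j (1 : ℤ), Matrix.transvection i j (-1 : ℤ),
    by rw [Matrix.transvection_mul_transvection_same _ _ (ne_of_lt hij)]; simp,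
    by rw [Matrix.transvection_mul_transvection_same _ _ (ne_of_lt hij)]; simp⟩,
   by
    constructor
    · intro a b hba
      show Matrix.transvection i j (1 : ℤ) a b = 0
      rw [Matrix.transvection, Matrix.add_apply, Matrix.one_apply,
        if_neg (ne_of_gt hba)]
      rw [Matrix.single_apply_of_ne]
      · ring
      · rintro ⟨rfl, rfl⟩
        exact absurd hij (not_lt_of_gt hba)
    · intro a
      show Matrix.transvection i j (1 : ℤ) a a = 1
      rw [Matrix.transvection, Matrix.add_apply, Matrix.one_apply, if_pos rfl]
      rw [Matrix.single_apply_of_ne]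
      · ring
      · rintro ⟨rfl, rfl⟩
        exact lt_irrefl _ hij⟩

/-- The set of index pairs `(i, j)` with `i < j`. -/
abbrev Pears (m : ℕ) := {p : Fin m × Fin m // p.1 < p.2}

/-- The ordered product `a 0 ^ x 0 * a 1 ^ x 1 * ⋯ * a (n-1) ^ x (n-1)`. -/
def malcevProd {G : Type*} [Group G] {n : ℕ} (a : Fin n → G) (x : Fin n → ℤ) : G :=
  ((List.finRange n).map fun i => a i ^ x i).prod

open scoped commutatorElement

/-- `a` is a Mal'cev basis: normal forms are unique and the subgroups
`G_i = ⟨a_i, …, a_n⟩` form a central series. -/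
def IsMalcevBasis {G : Type*} [Group G] {n : ℕ} (a : Fin n → G) : Prop :=
  Function.Bijective (malcevProd a) ∧
    ∀ i : Fin n, ∀ g : G, ∀ h ∈ Subgroup.closure {y | ∃ j : Fin n, i ≤ j ∧ y = a j},
      ⁅g, h⁆ ∈ Subgroup.closure {y | ∃ j : Fin n, i < j ∧ y = a j}

section PathSum

variable {ι κ R : Type*} (u : κ → ι × ι)

/- The sum, over the subsequences `k₁, …, k_r` of `L` with `(u k₁).1 = i`,
`(u kₛ).2 = (u kₛ₊₁).1` and `(u k_r).2 = j`, of `x k₁ * ⋯ * x k_r`. -/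
def pathSum [DecidableEq ι] [CommRing R] (x : κ → R) : List κ → ι → ι → R
  | [], i, j => if i = j then 1 else 0
  | k :: L, i, j => pathSum x L i j + if i = (u k).1 then x k * pathSum x L (u k).2 j else 0

theorem map_pathSum [DecidableEq ι] {S : Type*} [CommRing R] [CommRing S] (f : R →+* S)
    (x : κ → R) (L : List κ) (i j : ι) :
    f (pathSum u x L i j) = pathSum u (fun k => f (x k)) L i j := by
  induction L generalizing i j with
  | nil => simp only [pathSum]; split_ifs <;> simp
  | cons k L ih => simp only [pathSum, map_add, ih]; split_ifs <;> simp [ih]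

theorem Matrix.list_prod_transvection_apply [DecidableEq ι] [Fintype ι] [CommRing R]
    (x : κ → R) (L : List κ) (i j : ι) :
    (L.map fun k => Matrix.transvection (u k).1 (u k).2 (x k)).prod i j = pathSum u x L i j := by
  induction L generalizing i j with
  | nil => simp [pathSum, Matrix.one_apply]
  | cons k L ih =>
    rw [List.map_cons, List.prod_cons, pathSum]
    by_cases hi : i = (u k).1
    · subst hi
      simp [ih]
    · simp [Matrix.transvection_mul_apply_of_ne _ _ _ _ hi, ih, hi]

variable [LinearOrder ι] [CommRing R] {u} (hlt : ∀ k, (u k).1 < (u k).2) (x : κ → R)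
include hlt

theorem pathSum_eq_zero_of_lt (L : List κ) {i j : ι} (hji : j < i) : pathSum u x L i j = 0 := by
  induction L generalizing i with
  | nil => simp [pathSum, hji.ne']
  | cons k L ih =>
    rw [pathSum, ih hji]
    split_ifs with hi
    · rw [ih (hji.trans (hi ▸ hlt k)), mul_zero, add_zero]
    · rw [add_zero]

theorem pathSum_self (L : List κ) (i : ι) : pathSum u x L i i = 1 := by
  induction L with
  | nil => simp [pathSum]
  | cons k L ih =>
    rw [pathSum, ih]
    split_ifs with hi
    · rw [pathSum_eq_zero_of_lt hlt x L (hi ▸ hlt k), mul_zero, add_zero]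
    · rw [add_zero]

end PathSum

section Chains

variable {α : Type*}

def flattenPairs : List (α × α) → List α
  | [] => []
  | p :: c => p.1 :: p.2 :: flattenPairs c

theorem flattenPairs_injective :
    Function.Injective (flattenPairs : List (α × α) → List α) := by
  intro c
  induction c with
  | nil => rintro (_ | ⟨q, c'⟩) h <;> simp_all [flattenPairs]
  | cons p c ih =>
    rintro (_ | ⟨q, c'⟩) h
    · simp [flattenPairs] at h
    · simp only [flattenPairs, List.cons.injEq] at h
      rw [Prod.ext h.1 h.2.1, ih h.2.2]

theorem mem_flattenPairs {c : List (α × α)} {x : α} :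
    x ∈ flattenPairs c ↔ ∃ p ∈ c, x = p.1 ∨ x = p.2 := by
  induction c with
  | nil => simp [flattenPairs]
  | cons p c ih => simp [flattenPairs, ih, or_assoc, eq_comm]

theorem count_flattenPairs [DecidableEq α] (c : List (α × α)) (x : α) :
    (flattenPairs c).count x = (c.map Prod.fst).count x + (c.map Prod.snd).count x := by
  induction c with
  | nil => simp [flattenPairs]
  | cons p c ih => simp only [flattenPairs, List.map_cons, List.count_cons, ih]; omega

variable [LinearOrder α]

def IsChainIn (lo hi : α) : List (α × α) → Prop
  | [] => True
  | p :: c => lo ≤ p.1 ∧ p.1 < p.2 ∧ p.2 ≤ hi ∧ IsChainIn p.2 hi c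

namespace IsChainIn

variable {lo hi : α} {c : List (α × α)}

theorem mono {lo' hi' : α} (hc : IsChainIn lo hi c) (hlo : lo' ≤ lo) (hhi : hi ≤ hi') :
    IsChainIn lo' hi' c := by
  induction c generalizing lo lo' with
  | nil => trivial
  | cons p c ih =>
    obtain ⟨h1, h2, h3, hc⟩ := hc
    exact ⟨hlo.trans h1, h2, h3.trans hhi, ih hc le_rfl⟩

theorem append {mid : α} {c' : List (α × α)} (hc : IsChainIn lo mid c)
    (hc' : IsChainIn mid hi c') (hlo : lo ≤ mid) (hhi : mid ≤ hi) :
    IsChainIn lo hi (c ++ c') := by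
  induction c generalizing lo with
  | nil => exact hc'.mono hlo le_rfl
  | cons p c ih =>
    obtain ⟨h1, h2, h3, hc⟩ := hc
    exact ⟨h1, h2, h3.trans hhi, ih hc h3⟩

theorem forall_mem (hc : IsChainIn lo hi c) :
    ∀ p ∈ c, lo ≤ p.1 ∧ p.1 < p.2 ∧ p.2 ≤ hi := by
  induction c generalizing lo with
  | nil => simp
  | cons p c ih =>
    obtain ⟨h1, h2, h3, hc⟩ := hc
    rintro q (_ | ⟨_, hq⟩)
    · exact ⟨h1, h2, h3⟩
    · obtain ⟨hq1, hq2, hq3⟩ := ih hc q hq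
      exact ⟨h1.trans (h2.le.trans hq1), hq2, hq3⟩

theorem pairwise_fst (hc : IsChainIn lo hi c) : (c.map Prod.fst).Pairwise (· < ·) := by
  induction c generalizing lo with
  | nil => simp
  | cons p c ih =>
    obtain ⟨-, h2, -, hc⟩ := hc
    refine List.pairwise_cons.2 ⟨?_, ih hc⟩
    simp only [List.mem_map]
    rintro _ ⟨q, hq, rfl⟩
    exact h2.trans_le (hc.forall_mem q hq).1

theorem pairwise_snd (hc : IsChainIn lo hi c) : (c.map Prod.snd).Pairwise (· < ·) := by
  induction c generalizing lo with
  | nil => simp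
  | cons p c ih =>
    obtain ⟨-, -, -, hc⟩ := hc
    refine List.pairwise_cons.2 ⟨?_, ih hc⟩
    simp only [List.mem_map]
    rintro _ ⟨q, hq, rfl⟩
    exact (hc.forall_mem q hq).1.trans_lt (hc.forall_mem q hq).2.1

theorem pairwise_flattenPairs (hc : IsChainIn lo hi c) : (flattenPairs c).Pairwise (· ≤ ·) := by
  induction c generalizing lo with
  | nil => simp [flattenPairs]
  | cons p c ih =>
    obtain ⟨-, h2, -, hc⟩ := hc
    have hge : ∀ x ∈ flattenPairs c, p.2 ≤ x := by
      intro x hx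
      obtain ⟨q, hq, rfl | rfl⟩ := mem_flattenPairs.1 hx
      · exact (hc.forall_mem q hq).1
      · exact (hc.forall_mem q hq).1.trans (hc.forall_mem q hq).2.1.le
    refine List.pairwise_cons.2 ⟨?_, List.pairwise_cons.2 ⟨hge, ih hc⟩⟩
    rintro x (_ | ⟨_, hx⟩)
    · exact h2.le
    · exact h2.le.trans (hge x hx)

theorem count_flattenPairs_lt_three (hc : IsChainIn lo hi c) (x : α) :
    (flattenPairs c).count x < 3 := by
  have h1 := List.nodup_iff_count_le_one.1 hc.pairwise_fst.nodup x
  have h2 := List.nodup_iff_count_le_one.1 hc.pairwise_snd.nodup x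
  rw [count_flattenPairs]
  omega

end IsChainIn

open Cardinal in
theorem mk_isChainIn_le [Fintype α] (lo hi : α) :
    #{c : List (α × α) // IsChainIn lo hi c} ≤ 3 ^ Fintype.card α := by
  classical
  let code : {c // IsChainIn lo hi c} → α → Fin 3 :=
    fun c x => ⟨(flattenPairs c.1).count x, c.2.count_flattenPairs_lt_three x⟩
  have hcode : Function.Injective code := by
    rintro ⟨c, hc⟩ ⟨c', hc'⟩ h
    have hperm : (flattenPairs c).Perm (flattenPairs c') :=
      List.perm_iff_count.2 fun x => congrArg Fin.val (congrFun h x)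
    exact Subtype.ext <| flattenPairs_injective <|
      hperm.eq_of_pairwise' hc.pairwise_flattenPairs hc'.pairwise_flattenPairs
  simpa using mk_le_of_injective hcode

end Chains

namespace UT

variable {m : ℕ}

def toMatrix (m : ℕ) : UT m →* Matrix (Fin m) (Fin m) ℤ :=
  (Units.coeHom _).comp (UT m).subtype

def entry (i j : Fin m) (h : UT m) : ℚ := toMatrix m h i j

theorem entry_mul (i j : Fin m) (h g : UT m) :
    entry i j (h * g) = ∑ l, entry i l h * entry l j g := by
  simp [entry, Matrix.mul_apply]

theorem entry_of_lt {i j : Fin m} (hji : j < i) (h : UT m) : entry i j h = 0 := by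
  simp [entry, toMatrix, h.2.1 i j hji]

theorem entry_self (i : Fin m) : (entry i i : UT m → ℚ) = 1 := by
  funext h
  simp [entry, toMatrix, h.2.2 i]

theorem toMatrix_sUT_zpow {i j : Fin m} (hij : i < j) (z : ℤ) :
    toMatrix m (sUT i j hij ^ z) = Matrix.transvection i j z := by
  have hmul (c d : ℤ) := Matrix.transvection_mul_transvection_same (R := ℤ) _ _ hij.ne c d
  induction z using Int.induction_on with
  | zero => simp
  | succ k ih =>
    rw [zpow_add_one, map_mul, ih]
    exact hmul k 1
  | pred k ih =>
    rw [zpow_sub_one, map_mul, ih]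
    exact hmul (-k) (-1)

section MalcevProduct

variable {n : ℕ} {u : Fin n → Fin m × Fin m} (hlt : ∀ k, (u k).1 < (u k).2)
  {a : Fin n → UT m} (ha : ∀ k, a k = sUT (u k).1 (u k).2 (hlt k))
include ha

theorem entry_malcevProd (x : Fin n → ℤ) (i j : Fin m) :
    entry i j (malcevProd a x) = pathSum u (fun k => (x k : ℚ)) (List.finRange n) i j := by
  have hmat : toMatrix m (malcevProd a x) =
      ((List.finRange n).map fun k => Matrix.transvection (u k).1 (u k).2 (x k)).prod := by
    simp only [malcevProd, map_list_prod, List.map_map]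
    congr 1
    exact List.map_congr_left fun k _ => by simp [ha k, toMatrix_sUT_zpow]
  rw [entry, hmat, Matrix.list_prod_transvection_apply]
  exact map_pathSum u (Int.castRingHom ℚ) x _ i j

theorem entry_eq_pathSum (hsurj : Function.Surjective (malcevProd a)) {t : Fin n → UT m → ℚ}
    (ht : ∀ (x : Fin n → ℤ) (k : Fin n), t k (malcevProd a x) = (x k : ℚ)) (i j : Fin m) :
    entry i j = pathSum u t (List.finRange n) i j := by
  funext h
  obtain ⟨x, rfl⟩ := hsurj h
  have := map_pathSum u (Pi.evalRingHom (fun _ => ℚ) (malcevProd a x)) t (List.finRange n) i j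
  simp only [Pi.evalRingHom_apply, ht] at this
  rw [entry_malcevProd hlt ha, this]

end MalcevProduct

section ChainSpan

def chainMonomial (c : List (Fin m × Fin m)) : UT m → ℚ :=
  (c.map fun p => entry p.1 p.2).prod

def chainSpan (lo hi : Fin m) : Submodule ℚ (UT m → ℚ) :=
  Submodule.span ℚ (Set.range fun c : {c // IsChainIn lo hi c} => chainMonomial c.1)

variable {lo hi : Fin m}

theorem chainMonomial_mem_chainSpan {c : List (Fin m × Fin m)} (hc : IsChainIn lo hi c) :
    chainMonomial c ∈ chainSpan lo hi :=
  Submodule.subset_span ⟨⟨c, hc⟩, rfl⟩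

theorem chainSpan_mono {lo' hi' : Fin m} (hlo : lo' ≤ lo) (hhi : hi ≤ hi') :
    chainSpan lo hi ≤ chainSpan lo' hi' :=
  Submodule.span_le.2 <| Set.range_subset_iff.2 fun c =>
    chainMonomial_mem_chainSpan (c.2.mono hlo hhi)

theorem mul_mem_chainSpan {mid : Fin m} (hlo : lo ≤ mid) (hhi : mid ≤ hi) {f f' : UT m → ℚ}
    (hf : f ∈ chainSpan lo mid) (hf' : f' ∈ chainSpan mid hi) : f * f' ∈ chainSpan lo hi := by
  have hle : chainSpan lo mid * chainSpan mid hi ≤ chainSpan lo hi := by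
    rw [chainSpan, chainSpan, Submodule.span_mul_span]
    refine Submodule.span_le.2 ?_
    rintro _ ⟨_, ⟨c, rfl⟩, _, ⟨c', rfl⟩, rfl⟩
    simpa [chainMonomial] using chainMonomial_mem_chainSpan (c.2.append c'.2 hlo hhi)
  exact hle (Submodule.mul_mem_mul hf hf')

theorem entry_mem_chainSpan {i j : Fin m} (hlo : lo ≤ i) (hij : i ≤ j) (hhi : j ≤ hi) :
    entry i j ∈ chainSpan lo hi := by
  rcases hij.eq_or_lt with rfl | hij
  · simpa [entry_self, chainMonomial] using
      chainMonomial_mem_chainSpan (lo := lo) (hi := hi) (c := []) trivial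
  · simpa [chainMonomial] using
      chainMonomial_mem_chainSpan (c := [(i, j)]) ⟨hlo, hij, hhi, trivial⟩

theorem entry_comp_mul_right (i j : Fin m) (g : UT m) :
    (fun h => entry i j (h * g)) = ∑ l ∈ Finset.Icc i j, entry l j g • entry i l := by
  funext h
  rw [entry_mul, Finset.sum_apply, ← Finset.sum_subset (Finset.subset_univ (Finset.Icc i j))]
  · exact Finset.sum_congr rfl fun l _ => mul_comm _ _
  · intro l _ hl
    rcases not_and_or.1 (Finset.mem_Icc.not.1 hl) with hl | hl
    · rw [entry_of_lt (not_le.1 hl), zero_mul]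
    · rw [entry_of_lt (not_le.1 hl), mul_zero]

theorem chainMonomial_comp_mul_right_mem (g : UT m) {c : List (Fin m × Fin m)}
    (hc : IsChainIn lo hi c) : (fun h => chainMonomial c (h * g)) ∈ chainSpan lo hi := by
  induction c generalizing lo with
  | nil => exact chainMonomial_mem_chainSpan hc
  | cons p c ih =>
    obtain ⟨h1, h2, h3, hc⟩ := hc
    have hsplit : (fun h => chainMonomial (p :: c) (h * g)) =
        ∑ l ∈ Finset.Icc p.1 p.2,
          entry l p.2 g • (entry p.1 l * fun h => chainMonomial c (h * g)) := by
      simp only [← smul_mul_assoc, ← Finset.sum_mul, ← entry_comp_mul_right]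
      rfl
    rw [hsplit]
    refine Submodule.sum_mem _ fun l hl => Submodule.smul_mem _ _ ?_
    obtain ⟨hl1, hl2⟩ := Finset.mem_Icc.1 hl
    exact mul_mem_chainSpan (h1.trans hl1) (hl2.trans h3)
      (entry_mem_chainSpan h1 hl1 le_rfl) (chainSpan_mono hl2 le_rfl (ih hc))

theorem comp_mul_right_mem_chainSpan (g : UT m) {f : UT m → ℚ} (hf : f ∈ chainSpan lo hi) :
    (fun h => f (h * g)) ∈ chainSpan lo hi := by
  have hle : chainSpan lo hi ≤ (chainSpan lo hi).comap (LinearMap.funLeft ℚ ℚ (· * g)) :=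
    Submodule.span_le.2 <| Set.range_subset_iff.2 fun c => chainMonomial_comp_mul_right_mem g c.2
  exact hle hf

theorem rank_chainSpan_le (lo hi : Fin m) :
    Module.rank ℚ (chainSpan lo hi) ≤ (3 : Cardinal) ^ m :=
  calc Module.rank ℚ (chainSpan lo hi) ≤ Cardinal.mk {c // IsChainIn lo hi c} :=
        (rank_span_le _).trans Cardinal.mk_range_le
    _ ≤ 3 ^ m := by simpa using mk_isChainIn_le lo hi

end ChainSpan

section CoordinateFunctions

variable {n : ℕ} {u : Fin n → Fin m × Fin m} (hlt : ∀ k, (u k).1 < (u k).2)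
  {t : Fin n → UT m → ℚ}
include hlt

/- The paths of length one from `i` to `j` are the `k` with `u k = (i, j)`; every longer path
only uses pairs of width `< j - i`. -/
theorem pathSum_sub_mem_chainSpan {d : ℕ}
    (ih : ∀ l, ((u l).2 : ℕ) - (u l).1 < d → t l ∈ chainSpan (u l).1 (u l).2)
    (L : List (Fin n)) {i j : Fin m} (hij : i < j) (hd : (j : ℕ) - i ≤ d) :
    pathSum u t L i j - (L.map fun k => if u k = (i, j) then t k else 0).sum ∈ chainSpan i j := by
  induction L generalizing i j with
  | nil => simp [pathSum, hij.ne]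
  | cons k L ihL =>
    have hstep : ((if i = (u k).1 then t k * pathSum u t L (u k).2 j else 0) -
        if u k = (i, j) then t k else 0) ∈ chainSpan i j := by
      by_cases hi : i = (u k).1
      swap
      · have : u k ≠ (i, j) := fun h => hi (by rw [h])
        simp [hi, this]
      subst hi
      have hk := hlt k
      rcases lt_trichotomy (u k).2 j with hkj | rfl | hjk
      · have hne : u k ≠ ((u k).1, j) := fun h => hkj.ne (congrArg Prod.snd h)
        rw [if_pos rfl, if_neg hne, sub_zero]
        have hdirect : (L.map fun l => if u l = ((u k).2, j) then t l else 0).sum ∈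
            chainSpan (u k).2 j := by
          refine list_sum_mem fun f hf => ?_
          obtain ⟨l, -, rfl⟩ := List.mem_map.1 hf
          split_ifs with hl
          · have := ih l (by simp only [hl]; omega)
            rwa [hl] at this
          · exact zero_mem _
        refine mul_mem_chainSpan hk.le hkj.le (ih k (by omega)) ?_
        simpa using add_mem (ihL hkj (by omega)) hdirect
      · rw [if_pos rfl, if_pos rfl, pathSum_self hlt, mul_one, sub_self]
        exact zero_mem _
      · have hne : u k ≠ ((u k).1, j) := fun h => hjk.ne' (congrArg Prod.snd h)
        simp [pathSum_eq_zero_of_lt hlt t L hjk, hne]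
    convert add_mem (ihL hij hd) hstep using 1
    simp only [pathSum, List.map_cons, List.sum_cons]
    ring

theorem coord_mem_chainSpan (hu : Function.Injective u)
    (hent : ∀ i j, entry i j = pathSum u t (List.finRange n) i j) (k : Fin n) :
    t k ∈ chainSpan (u k).1 (u k).2 := by
  induction hd : ((u k).2 : ℕ) - (u k).1 using Nat.strong_induction_on generalizing k with
  | _ d ih =>
    have hdirect : ((List.finRange n).map fun l => if u l = u k then t l else 0).sum = t k := by
      simp [← Fin.sum_univ_def, hu.eq_iff]
    have key := pathSum_sub_mem_chainSpan hlt (fun l hl => ih _ (hd ▸ hl) l rfl)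
      (List.finRange n) (hlt k) hd.le
    rw [← hent, hdirect] at key
    simpa using sub_mem (entry_mem_chainSpan le_rfl (hlt k).le le_rfl) key

end CoordinateFunctions

end UT

open UT in
theorem nickel_upper_bound_UT_general (m : ℕ) (hm : 2 ≤ m)
    (n : ℕ)
    (a : Fin n → ↥(UT m))
    (hinj : Function.Injective a)
    (hran : ∀ k : Fin n, ∃ p : Pears m, a k = sUT p.1.1 p.1.2 p.2)
    (hmal : IsMalcevBasis a)
    (t : Fin n → ↥(UT m) → ℚ)
    (ht : ∀ (x : Fin n → ℤ) (k : Fin n), t k (malcevProd a x) = (x k : ℚ)) :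
    Module.rank ℚ ↥(Submodule.span ℚ
      {f : ↥(UT m) → ℚ | ∃ (g : ↥(UT m)) (k : Fin n), f = fun h => t k (h * g⁻¹)}) ≤ (3 : Cardinal) ^ m := by
  choose p hp using hran
  let u : Fin n → Fin m × Fin m := fun k => (p k).1
  have hlt : ∀ k, (u k).1 < (u k).2 := fun k => (p k).2
  have hu : Function.Injective u := fun k l hkl => hinj (by rw [hp k, hp l, Subtype.ext hkl])
  have hent := entry_eq_pathSum hlt hp hmal.1.2 ht
  let lo : Fin m := ⟨0, by omega⟩
  let hi : Fin m := ⟨m - 1, by omega⟩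
  have hcoord : ∀ k, t k ∈ chainSpan lo hi := fun k =>
    chainSpan_mono (Fin.le_def.2 (Nat.zero_le _)) (Fin.le_def.2 (Nat.le_sub_one_of_lt (u k).2.isLt))
      (coord_mem_chainSpan hlt hu hent k)
  refine (Submodule.rank_mono (Submodule.span_le.2 ?_)).trans (rank_chainSpan_le lo hi)
  rintro _ ⟨g, k, rfl⟩
  exact comp_mul_right_mem_chainSpan g⁻¹ (hcoord k)

theorem nickel_upper_bound_UT (m : ℕ) (hm : 2 ≤ m)
    (n : ℕ) (hn : n = m * (m - 1) / 2)
    (a : Fin n → ↥(UT m))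
    (hinj : Function.Injective a)
    (hran : ∀ k : Fin n, ∃ p : Pears m, a k = sUT p.1.1 p.1.2 p.2)
    (hsurj : ∀ p : Pears m, ∃ k : Fin n, a k = sUT p.1.1 p.1.2 p.2)
    (hmal : IsMalcevBasis a)
    (t : Fin n → ↥(UT m) → ℚ)
    (ht : ∀ (x : Fin n → ℤ) (k : Fin n), t k (malcevProd a x) = (x k : ℚ)) :
    Module.rank ℚ ↥(Submodule.span ℚ
      {f : ↥(UT m) → ℚ | ∃ (g : ↥(UT m)) (k : Fin n), f = fun h => t k (h * g⁻¹)}) ≤ (3 : Cardinal) ^ m :=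
  nickel_upper_bound_UT_general m hm n a hinj hran hmal t ht
end

section
/- Let m ≥ 1 and let H be the (2m+1)-dimensional integral Heisenberg group with its Mal'cev basis (a_1, …, a_{2m+1}). Then the Nickel module of H, i.e., the ℚ-linear span of {g • t_k : g ∈ H, 1 ≤ k ≤ 2m+1} of the coordinate functions, has ℚ-dimension exactly 2m+2; a ℚ-basis is given by (t_1, …, t_{2m+1}, 1). -/
open scoped TensorProduct
open scoped commutatorElement

/-- The generators of the `(2m+1)`-dimensional integral Heisenberg group inside
`UT (m+2)`. -/
def heisGen (m : ℕ) : Fin (2 * m + 1) → ↥(UT (m + 2)) := fun k =>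
  if h : (k : ℕ) < m then
    sUT ⟨0, by omega⟩ ⟨(k : ℕ) + 1, by omega⟩ (Fin.mk_lt_mk.mpr (by omega))
  else if h2 : (k : ℕ) < 2 * m then
    sUT ⟨(k : ℕ) - m + 1, by omega⟩ ⟨m + 1, by omega⟩ (Fin.mk_lt_mk.mpr (by omega))
  else
    sUT ⟨0, by omega⟩ ⟨m + 1, by omega⟩ (Fin.mk_lt_mk.mpr (by omega))

/-- The `(2m+1)`-dimensional integral Heisenberg group. -/
def Heis (m : ℕ) : Subgroup ↥(UT (m + 2)) := Subgroup.closure (Set.range (heisGen m))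

/-- The Mal'cev basis `(a_1, …, a_{2m+1})` of the Heisenberg group. -/
def heisBasis (m : ℕ) : Fin (2 * m + 1) → ↥(Heis m) := fun k =>
  ⟨heisGen m k, Subgroup.subset_closure ⟨k, rfl⟩⟩

/-! In Mal'cev coordinates `x` the Heisenberg group is the group of matrices with first row
`(1, x_1, …, x_m, x_{2m+1} + Σ x_i x_{m+i})` and last column `(…, x_{m+1}, …, x_{2m}, 1)`.
Multiplying two of them shows that right translation by `y` adds `y_k` to every coordinate
`x_k`, except that the central coordinate also loses the bilinear term `Σ y_i x_{m+i}`. Hence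
every translate of a coordinate function `t_k` is a combination of `t_1, …, t_{2m+1}` and the
constant `1`; conversely `t_k` is its own translate, while `1` is the translate of `t_{2m+1}`
by `a_{2m+1}⁻¹` minus `t_{2m+1}`. Evaluating at the normal forms `1` and `a_k` shows that
`t_1, …, t_{2m+1}, 1` are linearly independent. -/

open Matrix

theorem List.prod_ofFn_one_add_of_mul_eq_zero {R : Type*} [Ring R] {n : ℕ} (f : Fin n → R)
    (hf : ∀ i j, f i * f j = 0) : (List.ofFn fun i => 1 + f i).prod = 1 + ∑ i, f i := by
  induction n with
  | zero => simp
  | succ n ih =>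
    have hzero : f 0 * ∑ i : Fin n, f i.succ = 0 := by simp [Finset.mul_sum, hf]
    rw [List.ofFn_succ, List.prod_cons, ih _ fun i j => hf _ _, Fin.sum_univ_succ,
      add_mul, one_mul, mul_add, mul_one, hzero]
    abel

theorem linearIndependent_snoc_one {G K : Type*} [Ring K] {n : ℕ} (t : Fin n → G → K)
    (p : (Fin n → ℤ) → G) (hp : ∀ x k, t k (p x) = x k) :
    LinearIndependent K (Fin.snoc t 1 : Fin (n + 1) → G → K) := by
  rw [Fintype.linearIndependent_iff]
  intro c hc
  have heval : ∀ x : Fin n → ℤ, ∑ k, c k.castSucc * x k + c (Fin.last n) = 0 := fun x => by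
    simpa [Fin.sum_univ_castSucc, hp] using congrFun hc (p x)
  have hlast : c (Fin.last n) = 0 := by simpa using heval 0
  intro k
  induction k using Fin.lastCases with
  | last => exact hlast
  | cast k => simpa [Pi.single_apply, hlast] using heval (Pi.single k 1)

theorem val_sUT_zpow {n : ℕ} (i j : Fin n) (hij : i < j) (k : ℤ) :
    (((sUT i j hij ^ k : UT n) : (Matrix (Fin n) (Fin n) ℤ)ˣ) : Matrix (Fin n) (Fin n) ℤ) =
      transvection i j (k : ℤ) := by
  induction k using Int.induction_on with
  | zero => simp [transvection]
  | succ k ih =>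
    rw [_root_.zpow_add_one, Subgroup.coe_mul, Units.val_mul, ih]
    exact transvection_mul_transvection_same _ _ hij.ne _ _
  | pred k ih =>
    rw [_root_.zpow_sub_one, Subgroup.coe_mul, Units.val_mul, ih]
    exact (transvection_mul_transvection_same _ _ hij.ne _ _).trans (by rw [sub_eq_add_neg])

namespace Heis

variable {m : ℕ}

def rowIdx (i : Fin m) : Fin (2 * m + 1) := ⟨i, by omega⟩

def colIdx (i : Fin m) : Fin (2 * m + 1) := ⟨m + i, by omega⟩

def midIdx (i : Fin m) : Fin (m + 2) := i.castSucc.succ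

theorem zero_lt_midIdx (i : Fin m) : 0 < midIdx i := Fin.succ_pos _

theorem midIdx_lt_last (i : Fin m) : midIdx i < Fin.last (m + 1) :=
  Fin.succ_lt_succ_iff.mpr (Fin.castSucc_lt_last i)

@[simp] theorem midIdx_ne_zero (i : Fin m) : midIdx i ≠ 0 := (zero_lt_midIdx i).ne'

@[simp] theorem last_ne_midIdx (i : Fin m) : Fin.last (m + 1) ≠ midIdx i :=
  (midIdx_lt_last i).ne'

theorem midIdx_injective : Function.Injective (midIdx (m := m)) :=
  (Fin.succ_injective _).comp (Fin.castSucc_injective _)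

def strictMat (u v : Fin m → ℤ) (c : ℤ) : Matrix (Fin (m + 2)) (Fin (m + 2)) ℤ :=
  ∑ i, single 0 (midIdx i) (u i) + ∑ i, single (midIdx i) (Fin.last _) (v i) +
    single 0 (Fin.last _) c

theorem strictMat_add (u v u' v' : Fin m → ℤ) (c c' : ℤ) :
    strictMat u v c + strictMat u' v' c' = strictMat (u + u') (v + v') (c + c') := by
  simp only [strictMat, Pi.add_apply, single_add, Finset.sum_add_distrib]
  abel

theorem strictMat_mul (u v u' v' : Fin m → ℤ) (c c' : ℤ) :
    strictMat u v c * strictMat u' v' c' = strictMat 0 0 (u ⬝ᵥ v') := by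
  have hdiag : ∀ i, ∑ j, single (0 : Fin (m + 2)) (midIdx i) (u i) *
      single (midIdx j) (Fin.last _) (v' j) = single 0 (Fin.last (m + 1)) (u i * v' i) := by
    intro i
    rw [Fintype.sum_eq_single i fun j hj =>
      single_mul_single_of_ne _ _ _ _ (midIdx_injective.ne (Ne.symm hj)) _]
    exact single_mul_single_same _ _ _ _ _
  simp only [strictMat, mul_add, Finset.mul_sum, add_mul, Finset.sum_mul, ne_eq, midIdx_ne_zero,
    not_false_eq_true, single_mul_single_of_ne, Finset.sum_const_zero, Fin.last_eq_zero_iff,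
    Nat.add_eq_zero_iff, one_ne_zero, and_false, add_zero, last_ne_midIdx, zero_add,
    Pi.zero_apply, single_zero, dotProduct]
  rw [Finset.sum_comm]
  simp only [hdiag]
  exact (map_sum (singleAddMonoidHom (α := ℤ) 0 (Fin.last (m + 1))) _ _).symm

theorem one_add_strictMat_mul (u v u' v' : Fin m → ℤ) (c c' : ℤ) :
    (1 + strictMat u v c) * (1 + strictMat u' v' c') =
      1 + strictMat (u + u') (v + v') (c + c' + u ⬝ᵥ v') := by
  calc (1 + strictMat u v c) * (1 + strictMat u' v' c')
      = 1 + (strictMat u v c + strictMat u' v' c' + strictMat u v c * strictMat u' v' c') := by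
        noncomm_ring
    _ = _ := by rw [strictMat_mul, strictMat_add, strictMat_add, add_zero, add_zero]

def toMatrix : Heis m →* Matrix (Fin (m + 2)) (Fin (m + 2)) ℤ :=
  (Units.coeHom _).comp ((UT (m + 2)).subtype.comp (Heis m).subtype)

theorem toMatrix_injective : Function.Injective (toMatrix (m := m)) :=
  fun _ _ h => Subtype.ext (Subtype.ext (Units.ext h))

theorem toMatrix_heisBasis_zpow (k : Fin (2 * m + 1)) (n : ℤ) :
    toMatrix (heisBasis m k ^ n) =
      (((heisGen m k ^ n : UT (m + 2)) : (Matrix (Fin (m + 2)) (Fin (m + 2)) ℤ)ˣ) :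
        Matrix (Fin (m + 2)) (Fin (m + 2)) ℤ) := by
  simp [toMatrix, heisBasis]

theorem toMatrix_heisBasis_rowIdx_zpow (i : Fin m) (n : ℤ) :
    toMatrix (heisBasis m (rowIdx i) ^ n) = 1 + single 0 (midIdx i) n := by
  have hgen : heisGen m (rowIdx i) = sUT 0 (midIdx i) (zero_lt_midIdx i) := by
    rw [heisGen, dif_pos (show (rowIdx i : ℕ) < m from i.isLt)]
    rfl
  rw [toMatrix_heisBasis_zpow, hgen, val_sUT_zpow]
  rfl

theorem toMatrix_heisBasis_colIdx_zpow (i : Fin m) (n : ℤ) :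
    toMatrix (heisBasis m (colIdx i) ^ n) = 1 + single (midIdx i) (Fin.last _) n := by
  have hgen : heisGen m (colIdx i) =
      sUT (midIdx i) (Fin.last _) (midIdx_lt_last i) := by
    rw [heisGen, dif_neg (by simp [colIdx]), dif_pos (by simp [colIdx]; omega)]
    congr 1
    ext
    simp [midIdx, colIdx]
  rw [toMatrix_heisBasis_zpow, hgen, val_sUT_zpow]
  rfl

theorem toMatrix_heisBasis_last_zpow (n : ℤ) :
    toMatrix (heisBasis m (Fin.last _) ^ n) = 1 + single 0 (Fin.last _) n := by
  have hgen : heisGen m (Fin.last _) = sUT 0 (Fin.last _) (Fin.last_pos) := by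
    rw [heisGen, dif_neg (by simp; omega), dif_neg (by simp)]
    rfl
  rw [toMatrix_heisBasis_zpow, hgen, val_sUT_zpow]
  rfl

theorem malcevProd_heisBasis (x : Fin (2 * m + 1) → ℤ) :
    malcevProd (heisBasis m) x =
      (List.ofFn fun i => heisBasis m (rowIdx i) ^ x (rowIdx i)).prod *
        (List.ofFn fun i => heisBasis m (colIdx i) ^ x (colIdx i)).prod *
        heisBasis m (Fin.last _) ^ x (Fin.last _) := by
  rw [malcevProd, ← List.ofFn_eq_map, List.ofFn_succ_last, List.ofFn_congr (two_mul m),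
    List.ofFn_add, List.prod_append, List.prod_append, List.prod_singleton]
  rfl

theorem toMatrix_malcevProd (x : Fin (2 * m + 1) → ℤ) :
    toMatrix (malcevProd (heisBasis m) x) =
      1 + strictMat (x ∘ rowIdx) (x ∘ colIdx)
        (x (Fin.last _) + (x ∘ rowIdx) ⬝ᵥ (x ∘ colIdx)) := by
  have hrow : toMatrix (List.ofFn fun i => heisBasis m (rowIdx i) ^ x (rowIdx i)).prod =
      1 + strictMat (x ∘ rowIdx) 0 0 := by
    simp only [map_list_prod, List.map_ofFn, Function.comp_def, toMatrix_heisBasis_rowIdx_zpow]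
    rw [List.prod_ofFn_one_add_of_mul_eq_zero _ fun i j => by simp]
    simp [strictMat]
  have hcol : toMatrix (List.ofFn fun i => heisBasis m (colIdx i) ^ x (colIdx i)).prod =
      1 + strictMat 0 (x ∘ colIdx) 0 := by
    simp only [map_list_prod, List.map_ofFn, Function.comp_def, toMatrix_heisBasis_colIdx_zpow]
    rw [List.prod_ofFn_one_add_of_mul_eq_zero _ fun i j => by simp]
    simp [strictMat]
  have hcenter : toMatrix (heisBasis m (Fin.last _) ^ x (Fin.last _)) =
      1 + strictMat 0 0 (x (Fin.last _)) := by
    simp [toMatrix_heisBasis_last_zpow, strictMat]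
  rw [malcevProd_heisBasis, map_mul, map_mul, hrow, hcol, hcenter, one_add_strictMat_mul,
    one_add_strictMat_mul]
  simp [add_comm]

@[simp] theorem rowIdx_ne_last (i : Fin m) : rowIdx i ≠ Fin.last _ := by
  simp [rowIdx, Fin.ext_iff]; omega

@[simp] theorem colIdx_ne_last (i : Fin m) : colIdx i ≠ Fin.last _ := by
  simp [colIdx, Fin.ext_iff]; omega

theorem malcevProd_heisBasis_mul (x y : Fin (2 * m + 1) → ℤ) :
    malcevProd (heisBasis m) x * malcevProd (heisBasis m) y =
      malcevProd (heisBasis m)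
        (x + y - Pi.single (Fin.last _) ((y ∘ rowIdx) ⬝ᵥ (x ∘ colIdx))) := by
  set z := x + y - Pi.single (Fin.last _) ((y ∘ rowIdx) ⬝ᵥ (x ∘ colIdx))
  have hrow : z ∘ rowIdx = x ∘ rowIdx + y ∘ rowIdx := by ext i; simp [z]
  have hcol : z ∘ colIdx = x ∘ colIdx + y ∘ colIdx := by ext i; simp [z]
  apply toMatrix_injective
  rw [map_mul, toMatrix_malcevProd, toMatrix_malcevProd, toMatrix_malcevProd,
    one_add_strictMat_mul, hrow, hcol]
  congr 2
  simp only [z, Pi.add_apply, Pi.sub_apply, Pi.single_eq_same, dotProduct_add, add_dotProduct]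
  ring

variable {t : Fin (2 * m + 1) → Heis m → ℚ}

theorem coord_mul_malcevProd (hsurj : Function.Surjective (malcevProd (heisBasis m)))
    (ht : ∀ x k, t k (malcevProd (heisBasis m) x) = (x k : ℚ))
    (h : Heis m) (k : Fin (2 * m + 1)) (y : Fin (2 * m + 1) → ℤ) :
    t k (h * malcevProd (heisBasis m) y) = t k h + y k -
      if k = Fin.last _ then ∑ i, (y (rowIdx i) : ℚ) * t (colIdx i) h else 0 := by
  obtain ⟨x, rfl⟩ := hsurj h
  rw [malcevProd_heisBasis_mul, ht, ht]
  simp only [Pi.sub_apply, Pi.add_apply, Pi.single_apply, ht, dotProduct, Function.comp_apply]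
  split_ifs <;> push_cast <;> ring

open Submodule in
theorem span_translates_eq (hsurj : Function.Surjective (malcevProd (heisBasis m)))
    (ht : ∀ x k, t k (malcevProd (heisBasis m) x) = (x k : ℚ)) :
    span ℚ {f : Heis m → ℚ | ∃ (g : Heis m) (k : Fin (2 * m + 1)),
        f = fun h => t k (h * g⁻¹)} =
      span ℚ (Set.range (Fin.snoc t 1)) := by
  have ht_mem : ∀ k, t k ∈ span ℚ (Set.range (Fin.snoc t 1)) :=
    fun k => subset_span ⟨k.castSucc, Fin.snoc_castSucc ..⟩
  have hone_mem : 1 ∈ span ℚ (Set.range (Fin.snoc t 1)) :=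
    subset_span ⟨Fin.last _, Fin.snoc_last ..⟩
  apply le_antisymm
  · rw [span_le]
    rintro _ ⟨g, k, rfl⟩
    obtain ⟨y, hy⟩ := hsurj g⁻¹
    have htranslate : (fun h => t k (h * g⁻¹)) = t k + (y k : ℚ) • 1 -
        if k = Fin.last _ then ∑ i, (y (rowIdx i) : ℚ) • t (colIdx i) else 0 := by
      ext h
      rw [← hy, coord_mul_malcevProd hsurj ht]
      split_ifs <;> simp
    rw [htranslate]
    refine sub_mem (add_mem (ht_mem k) (smul_mem _ _ hone_mem)) ?_
    split_ifs
    · exact sum_mem fun i _ => smul_mem _ _ (ht_mem _)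
    · exact zero_mem _
  · rw [span_le]
    rintro _ ⟨k, rfl⟩
    induction k using Fin.lastCases with
    | last =>
      set y : Fin (2 * m + 1) → ℤ := Pi.single (Fin.last _) 1
      have hone : (1 : Heis m → ℚ) =
          (fun h => t (Fin.last _) (h * (malcevProd (heisBasis m) y)⁻¹⁻¹)) -
            t (Fin.last _) := by
        ext h
        rw [inv_inv, Pi.sub_apply, coord_mul_malcevProd hsurj ht]
        simp [y]
      rw [Fin.snoc_last, hone]
      exact sub_mem (subset_span ⟨_, _, rfl⟩) (subset_span ⟨1, Fin.last _, by simp⟩)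
    | cast k =>
      rw [Fin.snoc_castSucc]
      exact subset_span ⟨1, k, by simp⟩

end Heis

theorem nickel_heisenberg_general (m : ℕ)
    (hmal : IsMalcevBasis (heisBasis m))
    (t : Fin (2 * m + 1) → ↥(Heis m) → ℚ)
    (ht : ∀ (x : Fin (2 * m + 1) → ℤ) (k : Fin (2 * m + 1)),
      t k (malcevProd (heisBasis m) x) = (x k : ℚ)) :
    Submodule.span ℚ
        {f : ↥(Heis m) → ℚ | ∃ (g : ↥(Heis m)) (k : Fin (2 * m + 1)),
          f = fun h => t k (h * g⁻¹)} =
      Submodule.span ℚ (Set.range fun k : Fin (2 * m + 2) =>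
        if h : (k : ℕ) < 2 * m + 1 then t ⟨(k : ℕ), h⟩ else fun _ => (1 : ℚ)) ∧
    LinearIndependent ℚ (fun k : Fin (2 * m + 2) =>
        if h : (k : ℕ) < 2 * m + 1 then t ⟨(k : ℕ), h⟩ else fun _ => (1 : ℚ)) ∧
    Module.finrank ℚ ↥(Submodule.span ℚ
        {f : ↥(Heis m) → ℚ | ∃ (g : ↥(Heis m)) (k : Fin (2 * m + 1)),
          f = fun h => t k (h * g⁻¹)}) = 2 * m + 2 := by
  have hspan := Heis.span_translates_eq hmal.1.2 ht
  have hli := linearIndependent_snoc_one t _ ht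
  refine ⟨hspan, hli, ?_⟩
  rw [hspan, finrank_span_eq_card hli, Fintype.card_fin]

theorem nickel_heisenberg (m : ℕ) (hm : 1 ≤ m)
    (hmal : IsMalcevBasis (heisBasis m))
    (t : Fin (2 * m + 1) → ↥(Heis m) → ℚ)
    (ht : ∀ (x : Fin (2 * m + 1) → ℤ) (k : Fin (2 * m + 1)),
      t k (malcevProd (heisBasis m) x) = (x k : ℚ)) :
    Submodule.span ℚ
        {f : ↥(Heis m) → ℚ | ∃ (g : ↥(Heis m)) (k : Fin (2 * m + 1)),
          f = fun h => t k (h * g⁻¹)} =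
      Submodule.span ℚ (Set.range fun k : Fin (2 * m + 2) =>
        if h : (k : ℕ) < 2 * m + 1 then t ⟨(k : ℕ), h⟩ else fun _ => (1 : ℚ)) ∧
    LinearIndependent ℚ (fun k : Fin (2 * m + 2) =>
        if h : (k : ℕ) < 2 * m + 1 then t ⟨(k : ℕ), h⟩ else fun _ => (1 : ℚ)) ∧
    Module.finrank ℚ ↥(Submodule.span ℚ
        {f : ↥(Heis m) → ℚ | ∃ (g : ↥(Heis m)) (k : Fin (2 * m + 1)),
          f = fun h => t k (h * g⁻¹)}) = 2 * m + 2 :=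
  nickel_heisenberg_general m hmal t ht
end

section
/- Let G be a group with Mal'cev basis (a_1, …, a_p) and H a group with Mal'cev basis (b_1, …, b_q), with p, q ≥ 1. Then ((a_1,1), …, (a_p,1), (1,b_1), …, (1,b_q)) is a Mal'cev basis of the direct product G × H, and if the Nickel modules of G and of H have finite ℚ-dimensions M and N respectively, then the Nickel module of G × H with respect to this Mal'cev basis has ℚ-dimension M + N − 1. -/
open scoped TensorProduct
open scoped commutatorElement

/-!
The Mal'cev series of `G × H` for the concatenated basis is `G_i × H` followed by `1 × H_j`,
and commutators in `G × H` are computed componentwise, which gives the Mal'cev property.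
Coordinates with respect to the concatenated basis are `t_i ∘ fst` and `t'_j ∘ snd`, so the
Nickel module of `G × H` is the sum of the pullbacks of the Nickel modules of `G` and `H`
along the two projections. A function pulled back along both projections is constant, and
the constants lie in both Nickel modules because `t_n h - t_n (h a_n⁻¹) = 1` for the last basis
element `a_n`. Hence the two pullbacks meet in a line and the dimension is `M + N - 1`.
-/

open Function

section Malcev

variable {G H : Type*} [Group G] [Group H]

lemma malcevProd_eq_prod_ofFn {n : ℕ} (a : Fin n → G) (x : Fin n → ℤ) :
    malcevProd a x = (List.ofFn fun i => a i ^ x i).prod := by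
  rw [malcevProd, List.ofFn_eq_map]

lemma malcevProd_append {p q : ℕ} (a : Fin p → G) (b : Fin q → G) (x : Fin p → ℤ)
    (y : Fin q → ℤ) :
    malcevProd (Fin.append a b) (Fin.append x y) = malcevProd a x * malcevProd b y := by
  have hfactors : (fun k => Fin.append a b k ^ Fin.append x y k) =
      Fin.append (fun i => a i ^ x i) fun j => b j ^ y j := by
    funext k
    induction k using Fin.addCases <;> simp
  rw [malcevProd_eq_prod_ofFn, hfactors, List.ofFn_fin_append, List.prod_append,
    ← malcevProd_eq_prod_ofFn, ← malcevProd_eq_prod_ofFn]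

lemma map_malcevProd {K : Type*} [Group K] (φ : G →* K) {n : ℕ} (a : Fin n → G)
    (x : Fin n → ℤ) : φ (malcevProd a x) = malcevProd (fun i => φ (a i)) x := by
  simp only [malcevProd_eq_prod_ofFn, map_list_prod, List.map_ofFn, comp_def, map_zpow]

lemma malcevProd_mul_zpow_last {m : ℕ} (a : Fin (m + 1) → G) (x : Fin (m + 1) → ℤ)
    (z : ℤ) : malcevProd a x * a (Fin.last m) ^ z =
      malcevProd a (update x (Fin.last m) (x (Fin.last m) + z)) := by
  simp only [malcevProd_eq_prod_ofFn, List.ofFn_succ', List.concat_eq_append, List.prod_append,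
    List.prod_singleton, update_self, zpow_add, mul_assoc,
    update_of_ne (Fin.castSucc_lt_last _).ne]

def prodMalcevBasis {p q : ℕ} (a : Fin p → G) (b : Fin q → H) : Fin (p + q) → G × H :=
  Fin.append (fun i => ((a i, 1) : G × H)) fun j => ((1, b j) : G × H)

variable {p q : ℕ} {a : Fin p → G} {b : Fin q → H}

@[simp]
lemma prodMalcevBasis_castAdd (i : Fin p) : prodMalcevBasis a b (Fin.castAdd q i) = (a i, 1) := by
  simp [prodMalcevBasis]

@[simp]
lemma prodMalcevBasis_natAdd (j : Fin q) : prodMalcevBasis a b (Fin.natAdd p j) = (1, b j) := by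
  simp [prodMalcevBasis]

lemma malcevProd_prodMalcevBasis (x : Fin p → ℤ) (y : Fin q → ℤ) :
    malcevProd (prodMalcevBasis a b) (Fin.append x y) = (malcevProd a x, malcevProd b y) := by
  have hinl := map_malcevProd (MonoidHom.inl G H) a x
  have hinr := map_malcevProd (MonoidHom.inr G H) b y
  simp only [MonoidHom.inl_apply, MonoidHom.inr_apply] at hinl hinr
  rw [prodMalcevBasis, malcevProd_append, ← hinl, ← hinr, Prod.mk_mul_mk, mul_one, one_mul]

lemma bijective_malcevProd_prodMalcevBasis (ha : Bijective (malcevProd a))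
    (hb : Bijective (malcevProd b)) : Bijective (malcevProd (prodMalcevBasis a b)) := by
  have hcomp : malcevProd (prodMalcevBasis a b) ∘ Fin.appendEquiv p q =
      Prod.map (malcevProd a) (malcevProd b) :=
    funext fun xy => malcevProd_prodMalcevBasis xy.1 xy.2
  rw [← (Fin.appendEquiv p q).bijective_comp, hcomp]
  exact ha.prodMap hb

lemma closure_setOf_prodMalcevBasis (P : Fin (p + q) → Prop) :
    Subgroup.closure {y | ∃ j, P j ∧ y = prodMalcevBasis a b j} =
      (Subgroup.closure {x | ∃ i, P (Fin.castAdd q i) ∧ x = a i}).prod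
        (Subgroup.closure {x | ∃ j, P (Fin.natAdd p j) ∧ x = b j}) := by
  apply le_antisymm
  · rw [Subgroup.closure_le]
    rintro _ ⟨k, hk, rfl⟩
    induction k using Fin.addCases with
    | left i =>
      rw [prodMalcevBasis_castAdd]
      exact ⟨Subgroup.subset_closure ⟨i, hk, rfl⟩, one_mem _⟩
    | right j =>
      rw [prodMalcevBasis_natAdd]
      exact ⟨one_mem _, Subgroup.subset_closure ⟨j, hk, rfl⟩⟩
  · rw [Subgroup.prod_le_iff, MonoidHom.map_closure, MonoidHom.map_closure]
    constructor <;> apply Subgroup.closure_mono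
    · rintro _ ⟨_, ⟨i, hi, rfl⟩, rfl⟩
      exact ⟨Fin.castAdd q i, hi, (prodMalcevBasis_castAdd i).symm⟩
    · rintro _ ⟨_, ⟨j, hj, rfl⟩, rfl⟩
      exact ⟨Fin.natAdd p j, hj, (prodMalcevBasis_natAdd j).symm⟩

lemma closure_setOf_eq_top_of_surjective_malcevProd {n : ℕ} {a : Fin n → G}
    (ha : Surjective (malcevProd a)) {P : Fin n → Prop} (hP : ∀ j, P j) :
    Subgroup.closure {y | ∃ j, P j ∧ y = a j} = ⊤ := by
  refine eq_top_iff.2 fun g _ => ?_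
  obtain ⟨x, rfl⟩ := ha g
  rw [malcevProd_eq_prod_ofFn]
  refine list_prod_mem fun y hy => ?_
  obtain ⟨j, rfl⟩ := List.mem_ofFn.1 hy
  apply zpow_mem
  exact Subgroup.subset_closure ⟨j, hP j, rfl⟩

lemma closure_setOf_eq_bot {n : ℕ} {a : Fin n → G} {P : Fin n → Prop} (hP : ∀ j, ¬P j) :
    Subgroup.closure {y | ∃ j, P j ∧ y = a j} = ⊥ := by
  simp [hP]

lemma Subgroup.commutator_top_prod_le {A A' : Subgroup G} {B B' : Subgroup H}
    (hA : ⁅(⊤ : Subgroup G), A⁆ ≤ A') (hB : ⁅(⊤ : Subgroup H), B⁆ ≤ B') :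
    ⁅(⊤ : Subgroup (G × H)), A.prod B⁆ ≤ A'.prod B' := by
  rw [← Subgroup.top_prod_top, Subgroup.commutator_prod_prod]
  exact Subgroup.prod_mono hA hB

lemma isMalcevBasis_iff {n : ℕ} (a : Fin n → G) :
    IsMalcevBasis a ↔ Bijective (malcevProd a) ∧
      ∀ i, ⁅(⊤ : Subgroup G), Subgroup.closure {y | ∃ j, i ≤ j ∧ y = a j}⁆ ≤
        Subgroup.closure {y | ∃ j, i < j ∧ y = a j} := by
  simp only [IsMalcevBasis, Subgroup.commutator_le, Subgroup.mem_top, forall_const]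

lemma IsMalcevBasis.prod (ha : IsMalcevBasis a) (hb : IsMalcevBasis b) :
    IsMalcevBasis (prodMalcevBasis a b) := by
  rw [isMalcevBasis_iff] at *
  refine ⟨bijective_malcevProd_prodMalcevBasis ha.1 hb.1, fun k => ?_⟩
  rw [closure_setOf_prodMalcevBasis, closure_setOf_prodMalcevBasis]
  induction k using Fin.addCases with
  | left i =>
    simp only [(Fin.strictMono_castAdd q).le_iff_le, (Fin.strictMono_castAdd q).lt_iff_lt]
    have hB : Subgroup.closure {y | ∃ j, Fin.castAdd q i < Fin.natAdd p j ∧ y = b j} = ⊤ :=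
      closure_setOf_eq_top_of_surjective_malcevProd hb.1.2 fun j => by
        rw [Fin.lt_def, Fin.val_castAdd, Fin.val_natAdd]; omega
    exact Subgroup.commutator_top_prod_le (ha.2 i) (le_top.trans_eq hB.symm)
  | right j =>
    simp only [Fin.natAdd_le_natAdd_iff, Fin.natAdd_lt_natAdd_iff]
    have hA : Subgroup.closure {x | ∃ i, Fin.natAdd p j ≤ Fin.castAdd q i ∧ x = a i} = ⊥ :=
      closure_setOf_eq_bot fun i => by
        rw [Fin.le_def, Fin.val_castAdd, Fin.val_natAdd]; omega
    rw [hA]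
    exact Subgroup.commutator_top_prod_le
      ((Subgroup.commutator_bot_right _).trans_le bot_le) (hb.2 j)

end Malcev

section Nickel

variable {K : Type*} [Field K]

def nickelModule {G ι : Type*} [Group G] (t : ι → G → K) : Submodule K (G → K) :=
  Submodule.span K {f | ∃ (g : G) (k : ι), f = fun h => t k (h * g⁻¹)}

lemma range_funLeft_fst_inf_range_funLeft_snd_le {α β : Type*} :
    LinearMap.range (LinearMap.funLeft K K (Prod.fst : α × β → α)) ⊓
      LinearMap.range (LinearMap.funLeft K K (Prod.snd : α × β → β)) ≤ K ∙ 1 := by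
  rintro _ ⟨⟨u, rfl⟩, ⟨v, hvu⟩⟩
  rcases isEmpty_or_nonempty (α × β) with _ | ⟨⟨w₀⟩⟩
  · rw [Subsingleton.elim (LinearMap.funLeft K K Prod.fst u) 0]
    exact zero_mem _
  · refine Submodule.mem_span_singleton.2 ⟨u w₀.1, funext fun w => ?_⟩
    have h₀ := congrFun hvu (w₀.1, w.2)
    have h₁ := congrFun hvu w
    simp only [LinearMap.funLeft_apply] at h₀ h₁
    simp [← h₀, h₁]

lemma finrank_map_funLeft_fst_sup_map_funLeft_snd {α β : Type*} [Nonempty α] [Nonempty β]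
    {U : Submodule K (α → K)} {V : Submodule K (β → K)} [FiniteDimensional K U]
    [FiniteDimensional K V] (hU : 1 ∈ U) (hV : 1 ∈ V) :
    Module.finrank K ↥(U.map (LinearMap.funLeft K K (Prod.fst : α × β → α)) ⊔
      V.map (LinearMap.funLeft K K (Prod.snd : α × β → β))) =
      Module.finrank K U + Module.finrank K V - 1 := by
  let eU := Submodule.equivMapOfInjective _
    (LinearMap.funLeft_injective_of_surjective K K _ (Prod.fst_surjective (β := β))) U
  let eV := Submodule.equivMapOfInjective _
    (LinearMap.funLeft_injective_of_surjective K K _ (Prod.snd_surjective (α := α))) V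
  have : FiniteDimensional K (U.map (LinearMap.funLeft K K (Prod.fst : α × β → α))) :=
    Module.Finite.equiv eU
  have : FiniteDimensional K (V.map (LinearMap.funLeft K K (Prod.snd : α × β → β))) :=
    Module.Finite.equiv eV
  have hinf : U.map (LinearMap.funLeft K K Prod.fst) ⊓ V.map (LinearMap.funLeft K K Prod.snd) =
      K ∙ 1 := by
    refine le_antisymm ((inf_le_inf LinearMap.map_le_range LinearMap.map_le_range).trans
      range_funLeft_fst_inf_range_funLeft_snd_le) ?_
    rw [Submodule.span_le, Set.singleton_subset_iff]
    exact ⟨⟨1, hU, rfl⟩, ⟨1, hV, rfl⟩⟩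
  have hdim := Submodule.finrank_sup_add_finrank_inf_eq
    (U.map (LinearMap.funLeft K K (Prod.fst : α × β → α)))
    (V.map (LinearMap.funLeft K K (Prod.snd : α × β → β)))
  rw [hinf, finrank_span_singleton one_ne_zero, ← eU.finrank_eq, ← eV.finrank_eq] at hdim
  omega

variable {G H : Type*} [Group G] [Group H]

lemma nickelModule_eq_sup_map_funLeft {p q : ℕ} {t : Fin (p + q) → G × H → K}
    {u : Fin p → G → K} {v : Fin q → H → K} (hu : ∀ i w, t (Fin.castAdd q i) w = u i w.1)
    (hv : ∀ j w, t (Fin.natAdd p j) w = v j w.2) :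
    nickelModule t = (nickelModule u).map (LinearMap.funLeft K K Prod.fst) ⊔
      (nickelModule v).map (LinearMap.funLeft K K Prod.snd) := by
  simp only [nickelModule, Submodule.map_span, ← Submodule.span_union]
  congr 1
  ext f
  constructor
  · rintro ⟨g, k, rfl⟩
    induction k using Fin.addCases with
    | left i => exact .inl ⟨_, ⟨g.1, i, rfl⟩, funext fun w => by simp [hu]⟩
    | right j => exact .inr ⟨_, ⟨g.2, j, rfl⟩, funext fun w => by simp [hv]⟩
  · rintro (⟨_, ⟨g, i, rfl⟩, rfl⟩ | ⟨_, ⟨g, j, rfl⟩, rfl⟩)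
    · exact ⟨(g, 1), Fin.castAdd q i, funext fun w => by simp [hu]⟩
    · exact ⟨(1, g), Fin.natAdd p j, funext fun w => by simp [hv]⟩

lemma coord_last_mul_inv_last {m : ℕ} {a : Fin (m + 1) → G} (ha : Surjective (malcevProd a))
    {t : Fin (m + 1) → G → K} (ht : ∀ x k, t k (malcevProd a x) = x k) (g : G) :
    t (Fin.last m) (g * (a (Fin.last m))⁻¹) = t (Fin.last m) g - 1 := by
  obtain ⟨x, rfl⟩ := ha g
  rw [← zpow_neg_one, malcevProd_mul_zpow_last, ht, ht, update_self]
  push_cast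
  ring

lemma one_mem_nickelModule {n : ℕ} (hn : 1 ≤ n) {a : Fin n → G}
    (ha : Surjective (malcevProd a)) {t : Fin n → G → K}
    (ht : ∀ x k, t k (malcevProd a x) = x k) : 1 ∈ nickelModule t := by
  obtain ⟨m, rfl⟩ : ∃ m, n = m + 1 := ⟨n - 1, by omega⟩
  have hone : (1 : G → K) =
      (fun h => t (Fin.last m) (h * 1⁻¹)) -
        fun h => t (Fin.last m) (h * (a (Fin.last m))⁻¹) := by
    funext h
    simp [coord_last_mul_inv_last ha ht]
  rw [hone]
  exact sub_mem (Submodule.subset_span ⟨1, _, rfl⟩) (Submodule.subset_span ⟨_, _, rfl⟩)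

variable {p q : ℕ} {a : Fin p → G} {b : Fin q → H} {tG : Fin p → G → K}
  {tH : Fin q → H → K} {tP : Fin (p + q) → G × H → K}

lemma coord_prodMalcevBasis_castAdd (ha : Surjective (malcevProd a))
    (hb : Surjective (malcevProd b)) (htG : ∀ x k, tG k (malcevProd a x) = x k)
    (htP : ∀ x k, tP k (malcevProd (prodMalcevBasis a b) x) = x k) (i : Fin p) (w : G × H) :
    tP (Fin.castAdd q i) w = tG i w.1 := by
  obtain ⟨g, h⟩ := w
  obtain ⟨x, rfl⟩ := ha g
  obtain ⟨y, rfl⟩ := hb h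
  dsimp only
  rw [← malcevProd_prodMalcevBasis, htP, htG, Fin.append_left]

lemma coord_prodMalcevBasis_natAdd (ha : Surjective (malcevProd a))
    (hb : Surjective (malcevProd b)) (htH : ∀ y k, tH k (malcevProd b y) = y k)
    (htP : ∀ x k, tP k (malcevProd (prodMalcevBasis a b) x) = x k) (j : Fin q) (w : G × H) :
    tP (Fin.natAdd p j) w = tH j w.2 := by
  obtain ⟨g, h⟩ := w
  obtain ⟨x, rfl⟩ := ha g
  obtain ⟨y, rfl⟩ := hb h
  dsimp only
  rw [← malcevProd_prodMalcevBasis, htP, htH, Fin.append_right]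

end Nickel

theorem nickel_direct_product (G H : Type*) [Group G] [Group H]
    (p q : ℕ) (hp : 1 ≤ p) (hq : 1 ≤ q)
    (a : Fin p → G) (b : Fin q → H)
    (hma : IsMalcevBasis a) (hmb : IsMalcevBasis b)
    (tG : Fin p → G → ℚ)
    (htG : ∀ (x : Fin p → ℤ) (k : Fin p), tG k (malcevProd a x) = (x k : ℚ))
    (tH : Fin q → H → ℚ)
    (htH : ∀ (x : Fin q → ℤ) (k : Fin q), tH k (malcevProd b x) = (x k : ℚ))
    (M N : ℕ)
    (hMfin : Module.Finite ℚ ↥(Submodule.span ℚ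
      {f : G → ℚ | ∃ (g : G) (k : Fin p), f = fun h => tG k (h * g⁻¹)}))
    (hM : Module.finrank ℚ ↥(Submodule.span ℚ
      {f : G → ℚ | ∃ (g : G) (k : Fin p), f = fun h => tG k (h * g⁻¹)}) = M)
    (hNfin : Module.Finite ℚ ↥(Submodule.span ℚ
      {f : H → ℚ | ∃ (g : H) (k : Fin q), f = fun h => tH k (h * g⁻¹)}))
    (hN : Module.finrank ℚ ↥(Submodule.span ℚ
      {f : H → ℚ | ∃ (g : H) (k : Fin q), f = fun h => tH k (h * g⁻¹)}) = N) :
    IsMalcevBasis (Fin.append (fun i => ((a i, 1) : G × H)) fun j => ((1, b j) : G × H)) ∧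
    ∀ tP : Fin (p + q) → G × H → ℚ,
      (∀ (x : Fin (p + q) → ℤ) (k : Fin (p + q)),
        tP k (malcevProd
          (Fin.append (fun i => ((a i, 1) : G × H)) fun j => ((1, b j) : G × H)) x) =
          (x k : ℚ)) →
      Module.finrank ℚ ↥(Submodule.span ℚ
        {f : G × H → ℚ | ∃ (g : G × H) (k : Fin (p + q)), f = fun h => tP k (h * g⁻¹)}) =
        M + N - 1 := by
  refine ⟨hma.prod hmb, fun tP htP => ?_⟩
  have : FiniteDimensional ℚ (nickelModule tG) := hMfin
  have : FiniteDimensional ℚ (nickelModule tH) := hNfin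
  change Module.finrank ℚ (nickelModule tP) = M + N - 1
  rw [nickelModule_eq_sup_map_funLeft
      (coord_prodMalcevBasis_castAdd hma.1.2 hmb.1.2 htG htP)
      (coord_prodMalcevBasis_natAdd hma.1.2 hmb.1.2 htH htP),
    finrank_map_funLeft_fst_sup_map_funLeft_snd (one_mem_nickelModule hp hma.1.2 htG)
      (one_mem_nickelModule hq hmb.1.2 htH), ← hM, ← hN]
  rfl
end

section
/- Let m ≥ 4, μ = ⌊m/2⌋, and consider UT_m(ℤ) with its standard Mal'cev basis and coordinate functions t_{i,j}. For a subset S ⊆ {2, …, μ}, let w_S = ∏_{i∈S} s_{i,i+1}, the factors taken in increasing order of i. Then for every S ⊆ {2, …, μ} and every i with μ < i < m, one has w_S • t_{i,m} = t_{i,m}, i.e., t_{i,m}(h w_S^{−1}) = t_{i,m}(h) for all h ∈ UT_m(ℤ). -/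
open scoped TensorProduct

open scoped commutatorElement

/-!
Let `e` be the diagonal idempotent selecting the rows and columns `≥ m / 2`. On matrices `A` with
`e A (1 - e) = 0`, which includes all of `UT m`, the map `A ↦ e A e + (1 - e)` is multiplicative,
so it defines a homomorphism `Ψ` on `UT m`. It kills every transvection `s_{i,j}` with `i < m / 2`
and fixes the others, so `Ψ w_S = 1`. Applying `Ψ` to the Mal'cev normal forms of `h` and `h w_S⁻¹`
and using uniqueness of normal forms, the two elements have the same coordinates `t_{i,j}` for
all `i ≥ m / 2`.
-/

section Corner

variable {R : Type*} [Ring R]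

def cornerProj (e a : R) : R := e * a * e + (1 - e)

lemma cornerProj_one {e : R} (he : IsIdempotentElem e) : cornerProj e 1 = 1 := by
  rw [cornerProj, mul_one, he.eq, add_sub_cancel]

lemma cornerProj_mul {e a : R} (he : IsIdempotentElem e) (ha : e * a * (1 - e) = 0) (b : R) :
    cornerProj e (a * b) = cornerProj e a * cornerProj e b := by
  have hae : e * a * e = e * a := by
    rwa [mul_sub, mul_one, sub_eq_zero, eq_comm] at ha
  have hce : (1 - e) * e = 0 := by rw [sub_mul, one_mul, he.eq, sub_self]
  have hcc : (1 - e) * (1 - e) = 1 - e := he.one_sub.eq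
  simp only [cornerProj, hae, add_mul, mul_add, ← mul_assoc, hce, hcc, ha, zero_add, add_zero]

lemma cornerProj_one_add {e : R} (he : IsIdempotentElem e) (a : R) :
    cornerProj e (1 + a) = 1 + e * a * e := by
  rw [cornerProj, mul_add, add_mul, mul_one, he.eq]
  abel

end Corner

namespace Matrix

variable {ι R : Type*} [Fintype ι] [DecidableEq ι] (p : ι → Prop) [DecidablePred p]

def diagIndicator [Ring R] : Matrix ι ι R := diagonal fun i => if p i then 1 else 0

lemma isIdempotentElem_diagIndicator [Ring R] :
    IsIdempotentElem (diagIndicator p : Matrix ι ι R) := by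
  rw [IsIdempotentElem, diagIndicator, diagonal_mul_diagonal]
  congr 1
  ext i
  split_ifs <;> simp

lemma diagIndicator_mul_mul_one_sub_eq_zero [Ring R] {A : Matrix ι ι R}
    (hA : ∀ i j, p i → ¬ p j → A i j = 0) : diagIndicator p * A * (1 - diagIndicator p) = 0 := by
  ext i j
  by_cases hi : p i <;> by_cases hj : p j <;>
    simp [diagIndicator, diagonal_mul, mul_sub, sub_apply, hi, hj, hA i j]

lemma diagIndicator_mul_single_mul_diagIndicator [Ring R] (i j : ι) (c : R) :
    diagIndicator p * single i j c * diagIndicator p = if p i ∧ p j then single i j c else 0 := by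
  ext r s
  rw [apply_ite (fun M : Matrix ι ι R => M r s)]
  simp only [diagIndicator, diagonal_mul, mul_diagonal, single_apply, zero_apply]
  by_cases hrs : i = r ∧ j = s
  · obtain ⟨rfl, rfl⟩ := hrs
    by_cases hi : p i <;> by_cases hj : p j <;> simp [hi, hj]
  · simp [hrs]

lemma cornerProj_diagIndicator_transvection [CommRing R] (i j : ι) (c : R) :
    cornerProj (diagIndicator p) (transvection i j c) =
      if p i ∧ p j then transvection i j c else 1 := by
  rw [transvection, cornerProj_one_add (isIdempotentElem_diagIndicator p),
    diagIndicator_mul_single_mul_diagIndicator]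
  split_ifs <;> simp

end Matrix

section UpperUnitriangular

open Matrix

variable {m : ℕ} {p : Fin m → Prop} [DecidablePred p]

lemma diagIndicator_mul_mul_one_sub_eq_zero_of_mem_UT (hp : Monotone p)
    {A : (Matrix (Fin m) (Fin m) ℤ)ˣ} (hA : A ∈ UT m) :
    diagIndicator p * A.val * (1 - diagIndicator p) = 0 :=
  diagIndicator_mul_mul_one_sub_eq_zero p fun i j hi hj =>
    hA.1 i j (lt_of_not_ge fun hij => hj (hp hij hi))

def cornerHom (hp : Monotone p) : UT m →* (Matrix (Fin m) (Fin m) ℤ)ˣ :=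
  MonoidHom.toHomUnits
    { toFun := fun A => cornerProj (diagIndicator p) A.1.1
      map_one' := cornerProj_one (isIdempotentElem_diagIndicator p)
      map_mul' := fun A _ => cornerProj_mul (isIdempotentElem_diagIndicator p)
        (diagIndicator_mul_mul_one_sub_eq_zero_of_mem_UT hp A.2) _ }

lemma cornerHom_sUT (hp : Monotone p) {i j : Fin m} (hij : i < j) :
    cornerHom hp (sUT i j hij) = if p i then (UT m).subtype (sUT i j hij) else 1 := by
  ext : 1
  rw [cornerHom, MonoidHom.coe_toHomUnits, MonoidHom.coe_mk, OneHom.coe_mk]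
  change cornerProj _ (transvection i j 1) = _
  rw [cornerProj_diagIndicator_transvection, apply_ite Units.val, Units.val_one]
  exact if_congr ⟨fun h => h.1, fun h => ⟨h, hp hij.le h⟩⟩ rfl rfl

end UpperUnitriangular

section Malcev

variable {G H : Type*} [Group G] [Group H] {n : ℕ}

lemma map_malcevProd_of_forall_eq_ite (f g : G →* H) {P : Fin n → Prop} [DecidablePred P]
    {a : Fin n → G} (hfa : ∀ k, f (a k) = if P k then g (a k) else 1) (x : Fin n → ℤ) :
    f (malcevProd a x) = g (malcevProd a fun k => if P k then x k else 0) := by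
  simp only [malcevProd, map_list_prod, List.map_map]
  congr 1
  refine List.map_congr_left fun k _ => ?_
  simp only [Function.comp_apply, map_zpow, hfa k]
  split_ifs <;> simp

lemma coord_mul_inv_eq_of_map_eq_one (f g : G →* H) {P : Fin n → Prop} [DecidablePred P]
    {a : Fin n → G} (hfa : ∀ k, f (a k) = if P k then g (a k) else 1)
    (ha : Function.Bijective (malcevProd a)) (hg : Function.Injective g)
    {t : Fin n → G → ℚ} (ht : ∀ x k, t k (malcevProd a x) = (x k : ℚ))
    {w : G} (hw : f w = 1) (h : G) {k : Fin n} (hk : P k) : t k (h * w⁻¹) = t k h := by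
  obtain ⟨x, rfl⟩ := ha.2 h
  obtain ⟨y, hy⟩ := ha.2 (malcevProd a x * w⁻¹)
  have hfxy : f (malcevProd a y) = f (malcevProd a x) := by
    rw [hy, map_mul, map_inv, hw, inv_one, mul_one]
  rw [map_malcevProd_of_forall_eq_ite f g hfa, map_malcevProd_of_forall_eq_ite f g hfa] at hfxy
  have hyx : y k = x k := by simpa [hk] using congrFun (ha.1 (hg hfxy)) k
  rw [← hy, ht, ht, hyx]

end Malcev

section SuperdiagonalIndex

open Finset

def superdiagIndex (m : ℕ) (q : Pears m) : ℕ :=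
  (q.1.1 : ℕ) + ∑ ℓ ∈ Ico 1 ((q.1.2 : ℕ) - (q.1.1 : ℕ)), (m - ℓ)

lemma sum_Ico_sub_add_le {m d d' : ℕ} (hd : 1 ≤ d) (hdd' : d < d') :
    ∑ ℓ ∈ Ico 1 d, (m - ℓ) + (m - d) ≤ ∑ ℓ ∈ Ico 1 d', (m - ℓ) := by
  rw [← sum_Ico_succ_top hd]
  exact sum_le_sum_of_subset (Ico_subset_Ico le_rfl hdd')

lemma superdiagIndex_injective (m : ℕ) : Function.Injective (superdiagIndex m) := by
  rintro ⟨⟨i, j⟩, hij⟩ ⟨⟨i', j'⟩, hij'⟩ heq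
  simp only [superdiagIndex, Fin.lt_def] at heq hij hij'
  have hj := j.isLt
  have hj' := j'.isLt
  have hd : (j : ℕ) - i = j' - i' := by
    rcases lt_trichotomy ((j : ℕ) - i) (j' - i') with hlt | hd | hlt
    · have := sum_Ico_sub_add_le (m := m) (by omega) hlt
      omega
    · exact hd
    · have := sum_Ico_sub_add_le (m := m) (by omega) hlt
      omega
  rw [hd] at heq
  simp only [Subtype.mk.injEq, Prod.mk.injEq, Fin.ext_iff]
  omega

lemma card_pears (m : ℕ) : Fintype.card (Pears m) = m * (m - 1) / 2 := by
  rw [Fintype.card_congr (Equiv.subtypeProdEquivSigmaSubtype fun (i j : Fin m) => i < j),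
    Fintype.card_sigma]
  calc ∑ i : Fin m, Fintype.card {j : Fin m // i < j}
      = ∑ i : Fin m, (m - 1 - (i : ℕ)) := by
        simp [Fintype.card_subtype, filter_lt_eq_Ioi, Fin.card_Ioi]
    _ = ∑ k ∈ range m, (m - 1 - k) := Fin.sum_univ_eq_sum_range (fun k => m - 1 - k) m
    _ = ∑ k ∈ range m, k := sum_range_reflect (fun k => k) m
    _ = m * (m - 1) / 2 := sum_range_id m

lemma bijective_of_coe_eq_superdiagIndex {m n : ℕ} (hn : n = m * (m - 1) / 2)
    {pos : Pears m → Fin n} (hpos : ∀ q, (pos q : ℕ) = superdiagIndex m q) :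
    Function.Bijective pos :=
  (Fintype.bijective_iff_injective_and_card pos).2
    ⟨fun q q' h => superdiagIndex_injective m (by rw [← hpos, ← hpos, h]),
      by rw [card_pears, Fintype.card_fin, hn]⟩

end SuperdiagonalIndex

theorem wS_fixes_coordinates_UT (m : ℕ)
    (n : ℕ) (hn : n = m * (m - 1) / 2)
    (pos : Pears m → Fin n)
    (hpos : ∀ p : Pears m, (pos p : ℕ) =
      (p.1.1 : ℕ) + ∑ ℓ ∈ Finset.Ico 1 ((p.1.2 : ℕ) - (p.1.1 : ℕ)), (m - ℓ))
    (a : Fin n → ↥(UT m)) (ha : ∀ p : Pears m, a (pos p) = sUT p.1.1 p.1.2 p.2)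
    (hmal : IsMalcevBasis a)
    (t : Fin n → ↥(UT m) → ℚ)
    (ht : ∀ (x : Fin n → ℤ) (k : Fin n), t k (malcevProd a x) = (x k : ℚ)) :
    ∀ S : Finset ℕ, S ⊆ Finset.Ico 1 (m / 2) →
    ∀ i : Fin m, m / 2 ≤ (i : ℕ) → ∀ (hi : (i : ℕ) < m - 1),
    ∀ h : ↥(UT m),
      t (pos ⟨(i, ⟨m - 1, by omega⟩), Fin.lt_def.mpr hi⟩)
          (h * (((Finset.sort S (· ≤ ·)).map fun i0 : ℕ =>
            if h0 : i0 + 1 < m then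
              sUT ⟨i0, by omega⟩ ⟨i0 + 1, h0⟩ (Fin.mk_lt_mk.mpr (Nat.lt_succ_self _))
            else 1).prod)⁻¹) =
        t (pos ⟨(i, ⟨m - 1, by omega⟩), Fin.lt_def.mpr hi⟩) h := by
  intro S hS i hμi hi h
  have hp : Monotone fun r : Fin m => m / 2 ≤ (r : ℕ) := fun _ _ hrs hr => hr.trans hrs
  let e := Equiv.ofBijective pos (bijective_of_coe_eq_superdiagIndex hn hpos)
  have hΨa : ∀ k, cornerHom hp (a k) =
      if m / 2 ≤ ((e.symm k).1.1 : ℕ) then (UT m).subtype (a k) else 1 := by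
    intro k
    obtain ⟨q, rfl⟩ := e.surjective k
    rw [e.symm_apply_apply, Equiv.ofBijective_apply, ha]
    exact cornerHom_sUT hp q.2
  refine coord_mul_inv_eq_of_map_eq_one _ _ hΨa hmal.1 Subtype.val_injective ht ?_ h ?_
  · rw [map_list_prod, List.map_map]
    refine List.prod_eq_one fun _ hg => ?_
    obtain ⟨i0, hi0, rfl⟩ := List.mem_map.1 hg
    have hi0μ := Finset.mem_Ico.1 (hS ((Finset.mem_sort _).1 hi0))
    rw [Function.comp_apply, dif_pos (by omega), cornerHom_sUT, if_neg (by simpa using hi0μ.2)]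
  · rwa [Equiv.ofBijective_symm_apply_apply]
end

section
/- Let m ≥ 4, μ = ⌊m/2⌋, and M = {2, …, m−1}. For each subset S ⊆ {2, …, μ} define the polynomial p_S = ∏_{i∈S}(x_i − 1) · ∏_{i∈M∖S} x_i in ℚ[x_2, …, x_{m−1}]. Then the family {p_S : S ⊆ {2, …, μ}} is linearly independent over ℚ; in particular its span has dimension 2^{μ−1}. -/
open scoped TensorProduct
open scoped commutatorElement

/-! Evaluating at the point of `{0,1}^σ` whose zeros are exactly `U` kills every `p_S` with
`S ≠ U`: a factor `x_i - 1` vanishes if some `i ∈ S \ U`, a factor `x_i` vanishes if some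
`i ∈ U \ S`. So these evaluations, up to the sign `(-1)^#U`, form a dual family. -/

open MvPolynomial Finset

theorem Finset.natCard_subtype_subset {σ : Type*} (t : Finset σ) :
    Nat.card {S : Finset σ // S ⊆ t} = 2 ^ #t := by
  rw [Nat.card_congr (Equiv.subtypeEquivRight fun _ => mem_powerset.symm),
    Nat.card_eq_finsetCard, card_powerset]

section

variable {R σ : Type*} [CommRing R] [DecidableEq σ]

variable (R) in
noncomputable def pS (u S : Finset σ) : MvPolynomial σ R :=
  (∏ i ∈ S, (X i - 1)) * ∏ i ∈ u \ S, X i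

theorem eval_pS_self (u S : Finset σ) :
    eval (fun i => if i ∈ S then 0 else 1) (pS R u S) = (-1) ^ #S := by
  have hS : ∀ i ∈ S, (if i ∈ S then 0 else 1 : R) - 1 = -1 := by
    intro i hi
    simp [hi]
  have hcompl : ∀ i ∈ u \ S, (if i ∈ S then 0 else 1 : R) = 1 := by
    intro i hi
    simp [(mem_sdiff.mp hi).2]
  simp only [pS, map_mul, map_prod, map_sub, eval_X, map_one]
  rw [prod_congr rfl hS, prod_congr rfl hcompl, prod_const, prod_const_one, mul_one]

theorem eval_pS_of_ne {u S U : Finset σ} (hU : U ⊆ u) (hne : S ≠ U) :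
    eval (fun i => if i ∈ U then 0 else 1) (pS R u S) = 0 := by
  simp only [pS, map_mul, map_prod, map_sub, eval_X, map_one]
  obtain ⟨i, hiS, hiU⟩ | ⟨i, hiU, hiS⟩ : (∃ i ∈ S, i ∉ U) ∨ ∃ i ∈ U, i ∉ S := by
    by_contra! h
    exact hne (subset_antisymm h.1 h.2)
  · exact mul_eq_zero_of_left (prod_eq_zero hiS (by simp [hiU])) _
  · exact mul_eq_zero_of_right _
      (prod_eq_zero (mem_sdiff.mpr ⟨hU hiU, hiS⟩) (by simp [hiU]))

theorem linearIndependent_pS {t u : Finset σ} (htu : t ⊆ u) :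
    LinearIndependent R (fun S : {S : Finset σ // S ⊆ t} => pS R u S.1) := by
  refine .of_pairwise_dual_eq_zero_one _
    (fun U => (-1) ^ #U.1 • (aeval fun i => if i ∈ U.1 then (0 : R) else 1).toLinearMap) ?_ ?_
  · intro U S hUS
    simp [eval_pS_of_ne (U.2.trans htu) (Subtype.coe_ne_coe.mpr hUS.symm)]
  · intro U
    simp [eval_pS_self, ← mul_pow]

end

theorem pS_linearly_independent_general (m : ℕ) (μ : ℕ) (hμ : μ = m / 2) :
    LinearIndependent ℚ (fun S : {S : Finset ℕ // S ⊆ Finset.Icc 2 μ} =>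
      (∏ i ∈ S.1, (MvPolynomial.X i - 1)) *
        ∏ i ∈ Finset.Icc 2 (m - 1) \ S.1, (MvPolynomial.X i : MvPolynomial ℕ ℚ)) ∧
    Module.finrank ℚ ↥(Submodule.span ℚ (Set.range
      (fun S : {S : Finset ℕ // S ⊆ Finset.Icc 2 μ} =>
        (∏ i ∈ S.1, (MvPolynomial.X i - 1)) *
          ∏ i ∈ Finset.Icc 2 (m - 1) \ S.1, (MvPolynomial.X i : MvPolynomial ℕ ℚ)))) =
      2 ^ (μ - 1) := by
  have hli :=
    linearIndependent_pS (R := ℚ) (Icc_subset_Icc_right (a := 2) (by omega : μ ≤ m - 1))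
  have := Fintype.ofFinite {S : Finset ℕ // S ⊆ Icc 2 μ}
  refine ⟨hli, (finrank_span_eq_card hli).trans ?_⟩
  rw [← Nat.card_eq_fintype_card, natCard_subtype_subset, Nat.card_Icc,
    show μ + 1 - 2 = μ - 1 by omega]

theorem pS_linearly_independent (m : ℕ) (hm : 4 ≤ m) (μ : ℕ) (hμ : μ = m / 2) :
    LinearIndependent ℚ (fun S : {S : Finset ℕ // S ⊆ Finset.Icc 2 μ} =>
      (∏ i ∈ S.1, (MvPolynomial.X i - 1)) *
        ∏ i ∈ Finset.Icc 2 (m - 1) \ S.1, (MvPolynomial.X i : MvPolynomial ℕ ℚ)) ∧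
    Module.finrank ℚ ↥(Submodule.span ℚ (Set.range
      (fun S : {S : Finset ℕ // S ⊆ Finset.Icc 2 μ} =>
        (∏ i ∈ S.1, (MvPolynomial.X i - 1)) *
          ∏ i ∈ Finset.Icc 2 (m - 1) \ S.1, (MvPolynomial.X i : MvPolynomial ℕ ℚ)))) =
      2 ^ (μ - 1) :=
  pS_linearly_independent_general m μ hμ
end

section
/- Let G be a group with a Mal'cev basis (a_1, …, a_n) admitting multiplication polynomials q_1, …, q_n ∈ ℚ[x_1,…,x_n, y_1,…,y_n]. For a polynomial f ∈ ℚ[x_1, …, x_n], let f̂ : G → ℚ be the function defined by f̂(a_1^{x_1}⋯a_n^{x_n}) = f(x_1, …, x_n). Then the ℚ-linear span of the orbit {g • f̂ : g ∈ G} (where (g • f̂)(h) = f̂(h g^{−1})) is a finite-dimensional ℚ-vector space. -/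
open scoped TensorProduct
open scoped commutatorElement

/-!
Write `z = a^x` and `g⁻¹ = a^y` in normal form. By the multiplication polynomials,
`F (z * g⁻¹) = f (q (x, y)) = P (x, y)` for the single polynomial `P = f ∘ q`, so every
translate of `F` is a linear combination, with coefficients depending on `y` only, of the
finitely many monomials in `x` that occur in `P`.
-/

open MvPolynomial

namespace MvPolynomial

variable {R σ τ : Type*} [CommRing R]

theorem eval_sumElim_monomial (d : (σ ⊕ τ) →₀ ℕ) (c : R) (x : σ → R) (y : τ → R) :
    eval (Sum.elim x y) (monomial d c) =
      c * eval (Sum.elim (1 : σ → R) y) (monomial d 1) *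
        eval (Sum.elim x 1) (monomial d 1) := by
  have hsplit : Sum.elim x y = Sum.elim (1 : σ → R) y * Sum.elim x 1 := by
    ext (i | j) <;> simp
  simp only [eval_monomial, hsplit, Pi.mul_apply, mul_pow, Finsupp.prod_mul, one_mul, mul_assoc]

theorem eval_sumElim_mem_span (P : MvPolynomial (σ ⊕ τ) R) (y : τ → R) :
    (fun x : σ → R => eval (Sum.elim x y) P) ∈
      Submodule.span R ((fun (d : (σ ⊕ τ) →₀ ℕ) (x : σ → R) =>
        eval (Sum.elim x 1) (monomial d 1)) '' P.support) := by
  have hsum : (fun x : σ → R => eval (Sum.elim x y) P) =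
      ∑ d ∈ P.support, (P.coeff d * eval (Sum.elim (1 : σ → R) y) (monomial d 1)) •
        fun x : σ → R => eval (Sum.elim x 1) (monomial d 1) := by
    funext x
    conv_lhs => rw [P.as_sum, map_sum]
    simp only [Finset.sum_apply, Pi.smul_apply, smul_eq_mul]
    exact Finset.sum_congr rfl fun d _ => eval_sumElim_monomial d _ x y
  rw [hsum]
  exact Submodule.sum_mem _ fun d hd =>
    Submodule.smul_mem _ _ (Submodule.subset_span ⟨d, hd, rfl⟩)

theorem finiteDimensional_span_range_eval_sumElim {K : Type*} [Field K]
    (P : MvPolynomial (σ ⊕ τ) K) :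
    FiniteDimensional K (Submodule.span K
      (Set.range fun (y : τ → K) (x : σ → K) => eval (Sum.elim x y) P)) :=
  have : FiniteDimensional K (Submodule.span K
      ((fun (d : (σ ⊕ τ) →₀ ℕ) (x : σ → K) =>
        eval (Sum.elim x 1) (monomial d 1)) '' P.support)) :=
    FiniteDimensional.span_of_finite K (P.support.finite_toSet.image _)
  Submodule.finiteDimensional_of_le <| Submodule.span_le.2 <| by
    rintro _ ⟨y, rfl⟩
    exact eval_sumElim_mem_span P y

end MvPolynomial

theorem apply_malcevProd_mul_eq_eval_bind₁ {G : Type*} [Group G] {n : ℕ} {a : Fin n → G}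
    {q : Fin n → MvPolynomial (Fin n ⊕ Fin n) ℚ}
    (hq : ∀ x y : Fin n → ℤ, ∃ z : Fin n → ℤ,
      malcevProd a x * malcevProd a y = malcevProd a z ∧
      ∀ i : Fin n, (z i : ℚ) =
        MvPolynomial.eval (Sum.elim (fun j => (x j : ℚ)) fun j => (y j : ℚ)) (q i))
    {f : MvPolynomial (Fin n) ℚ} {F : G → ℚ}
    (hF : ∀ x : Fin n → ℤ,
      F (malcevProd a x) = MvPolynomial.eval (fun i => (x i : ℚ)) f) (x y : Fin n → ℤ) :
    F (malcevProd a x * malcevProd a y) =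
      eval (Sum.elim (fun j => (x j : ℚ)) fun j => (y j : ℚ)) (bind₁ q f) := by
  obtain ⟨z, hmul, hz⟩ := hq x y
  rw [hmul, hF, show (fun i => (z i : ℚ)) = _ from funext hz]
  exact (eval₂Hom_bind₁ _ _ _ _).symm

theorem orbit_span_finite_dimensional (G : Type*) [Group G]
    (n : ℕ) (a : Fin n → G) (hmal : IsMalcevBasis a)
    (q : Fin n → MvPolynomial (Fin n ⊕ Fin n) ℚ)
    (hq : ∀ x y : Fin n → ℤ, ∃ z : Fin n → ℤ,
      malcevProd a x * malcevProd a y = malcevProd a z ∧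
      ∀ i : Fin n, (z i : ℚ) =
        MvPolynomial.eval (Sum.elim (fun j => (x j : ℚ)) fun j => (y j : ℚ)) (q i))
    (f : MvPolynomial (Fin n) ℚ) (F : G → ℚ)
    (hF : ∀ x : Fin n → ℤ,
      F (malcevProd a x) = MvPolynomial.eval (fun i => (x i : ℚ)) f) :
    Module.Finite ℚ ↥(Submodule.span ℚ
      {h : G → ℚ | ∃ g : G, h = fun z => F (z * g⁻¹)}) := by
  have hsurj := hmal.1.surjective
  let coord : G → Fin n → ℚ := fun g i => (Function.surjInv hsurj g i : ℚ)
  let S := Set.range fun (y : Fin n → ℚ) (x : Fin n → ℚ) =>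
    eval (Sum.elim x y) (bind₁ q f)
  have horbit : {h : G → ℚ | ∃ g : G, h = fun z => F (z * g⁻¹)} ⊆
      LinearMap.funLeft ℚ ℚ coord '' S := by
    rintro _ ⟨g, rfl⟩
    refine ⟨_, ⟨coord g⁻¹, rfl⟩, funext fun z => ?_⟩
    rw [LinearMap.funLeft_apply]
    refine (apply_malcevProd_mul_eq_eval_bind₁ hq hF _ _).symm.trans ?_
    rw [Function.surjInv_eq hsurj, Function.surjInv_eq hsurj]
  have hspan : Submodule.span ℚ {h : G → ℚ | ∃ g : G, h = fun z => F (z * g⁻¹)} ≤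
      (Submodule.span ℚ S).map (LinearMap.funLeft ℚ ℚ coord) := by
    rw [Submodule.map_span]
    exact Submodule.span_mono horbit
  have : FiniteDimensional ℚ (Submodule.span ℚ S) :=
    finiteDimensional_span_range_eval_sumElim _
  exact Submodule.finiteDimensional_of_le hspan
end

section
/- Let G be a group with a Mal'cev basis (a_1, …, a_n) admitting multiplication polynomials q_1, …, q_n ∈ ℚ[x_1,…,x_n, y_1,…,y_n], and let t_1, …, t_n : G → ℚ be the coordinate functions. Then the Nickel module V, i.e., the ℚ-linear span of {g • t_k : g ∈ G, 1 ≤ k ≤ n}, is a finite-dimensional ℚ-vector space, it is invariant under the G-action (g • f)(h) = f(h g^{−1}), and this action is faithful: the induced group homomorphism from G to the group of ℚ-linear automorphisms of V is injective. -/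
open scoped TensorProduct
open scoped commutatorElement

/-!
Each right translate `h ↦ t_k(h g)` of a coordinate function equals `q_k(t(h), t(g))`; for fixed
`g` this is a polynomial in the coordinates `t_i(h)` whose monomials are among the finitely many
appearing in the `q_k`, so all translates lie in one finite-dimensional space. Faithfulness holds
because the coordinate functions themselves lie in the module and separate the points of `G`.
-/

namespace Nickel

variable {G R ι : Type*} [CommRing R]

theorem coordinates_injective {φ : (ι → ℤ) → G} (hφ : Function.Surjective φ) {t : ι → G → ℚ}
    (ht : ∀ x k, t k (φ x) = (x k : ℚ)) : Function.Injective fun x k => t k x := by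
  intro x y hxy
  obtain ⟨u, rfl⟩ := hφ x
  obtain ⟨v, rfl⟩ := hφ y
  congr 1
  funext k
  exact_mod_cast (ht u k).symm.trans ((congrFun hxy k).trans (ht v k))

/-- Exponent vectors live on `ι ⊕ ι` so that the monomials of a multiplication polynomial index
these functions directly. -/
def monomialFun [Fintype ι] (t : ι → G → R) (d : (ι ⊕ ι) →₀ ℕ) : G → R :=
  fun h => ∏ i, t i h ^ d (Sum.inl i)

theorem eval_sumElim_eq_sum_smul_monomialFun [Fintype ι] (t : ι → G → R)
    (p : MvPolynomial (ι ⊕ ι) R) (g : G) :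
    (fun h => MvPolynomial.eval (Sum.elim (fun j => t j h) fun j => t j g) p) =
      ∑ d ∈ p.support, (p.coeff d * ∏ j, t j g ^ d (Sum.inr j)) • monomialFun t d := by
  funext h
  simp only [MvPolynomial.eval_eq', Fintype.prod_sum_type, Sum.elim_inl, Sum.elim_inr,
    Finset.sum_apply, Pi.smul_apply, smul_eq_mul, monomialFun]
  exact Finset.sum_congr rfl fun d _ => by ring

variable [Group G]

theorem coordinate_mul_eq_eval {φ : (ι → ℤ) → G} (hφ : Function.Surjective φ) {t : ι → G → ℚ}
    (ht : ∀ x k, t k (φ x) = (x k : ℚ)) {q : ι → MvPolynomial (ι ⊕ ι) ℚ}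
    (hq : ∀ x y : ι → ℤ, ∃ z : ι → ℤ, φ x * φ y = φ z ∧
      ∀ i, (z i : ℚ) = MvPolynomial.eval (Sum.elim (fun j => (x j : ℚ)) fun j => (y j : ℚ)) (q i))
    (k : ι) (h g : G) :
    t k (h * g) = MvPolynomial.eval (Sum.elim (fun j => t j h) fun j => t j g) (q k) := by
  obtain ⟨x, rfl⟩ := hφ h
  obtain ⟨y, rfl⟩ := hφ g
  obtain ⟨z, hxy, hz⟩ := hq x y
  simp only [hxy, ht, hz]

def translates (t : ι → G → R) : Set (G → R) :=
  {f | ∃ (g : G) (k : ι), f = fun h => t k (h * g⁻¹)}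

theorem translate_mem_span_translates (t : ι → G → R) (g : G) {f : G → R}
    (hf : f ∈ Submodule.span R (translates t)) :
    (fun h => f (h * g⁻¹)) ∈ Submodule.span R (translates t) := by
  induction hf using Submodule.span_induction with
  | mem f hf =>
    obtain ⟨g₀, k, rfl⟩ := hf
    refine Submodule.subset_span ⟨g₀ * g, k, funext fun h => ?_⟩
    simp only [mul_inv_rev, mul_assoc]
  | zero => exact Submodule.zero_mem _
  | add f₁ f₂ _ _ h₁ h₂ => exact Submodule.add_mem _ h₁ h₂
  | smul c f _ hf => exact Submodule.smul_mem _ c hf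

theorem eq_one_of_forall_translate_eq (t : ι → G → R)
    (hsep : Function.Injective fun x k => t k x) {g : G}
    (hg : ∀ f ∈ Submodule.span R (translates t), ∀ h : G, f (h * g⁻¹) = f h) : g = 1 := by
  have hcoord (k : ι) : t k g⁻¹ = t k 1 := by
    simpa using hg _ (Submodule.subset_span ⟨1, k, rfl⟩) 1
  exact inv_eq_one.mp (hsep (funext hcoord))

theorem finite_span_translates [Fintype ι] [IsNoetherianRing R] (t : ι → G → R)
    (q : ι → MvPolynomial (ι ⊕ ι) R)
    (hq : ∀ k h g, t k (h * g) = MvPolynomial.eval (Sum.elim (fun j => t j h) fun j => t j g) (q k)) :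
    Module.Finite R (Submodule.span R (translates t)) := by
  classical
  let monomials : Finset ((ι ⊕ ι) →₀ ℕ) := Finset.univ.biUnion fun k => (q k).support
  have hle : Submodule.span R (translates t) ≤
      Submodule.span R (monomialFun t '' monomials) := by
    refine Submodule.span_le.mpr ?_
    rintro _ ⟨g, k, rfl⟩
    simp only [hq, eval_sumElim_eq_sum_smul_monomialFun]
    refine Submodule.sum_smul_mem _ _ fun d hd => Submodule.subset_span ⟨d, ?_, rfl⟩
    exact Finset.mem_biUnion.mpr ⟨k, Finset.mem_univ k, hd⟩
  exact Module.Finite.iff_fg.mpr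
    ((Submodule.fg_span ((Finset.finite_toSet _).image _)).of_le hle)

end Nickel

open Nickel in
theorem nickel_module_faithful (G : Type*) [Group G]
    (n : ℕ) (a : Fin n → G) (hmal : IsMalcevBasis a)
    (q : Fin n → MvPolynomial (Fin n ⊕ Fin n) ℚ)
    (hq : ∀ x y : Fin n → ℤ, ∃ z : Fin n → ℤ,
      malcevProd a x * malcevProd a y = malcevProd a z ∧
      ∀ i : Fin n, (z i : ℚ) =
        MvPolynomial.eval (Sum.elim (fun j => (x j : ℚ)) fun j => (y j : ℚ)) (q i))
    (t : Fin n → G → ℚ)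
    (ht : ∀ (x : Fin n → ℤ) (k : Fin n), t k (malcevProd a x) = (x k : ℚ)) :
    Module.Finite ℚ ↥(Submodule.span ℚ
      {f : G → ℚ | ∃ (g : G) (k : Fin n), f = fun h => t k (h * g⁻¹)}) ∧
    (∀ g : G, ∀ f ∈ Submodule.span ℚ
      {f : G → ℚ | ∃ (g : G) (k : Fin n), f = fun h => t k (h * g⁻¹)},
      (fun h => f (h * g⁻¹)) ∈ Submodule.span ℚ
        {f : G → ℚ | ∃ (g : G) (k : Fin n), f = fun h => t k (h * g⁻¹)}) ∧
    (∀ g : G, (∀ f ∈ Submodule.span ℚ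
        {f : G → ℚ | ∃ (g : G) (k : Fin n), f = fun h => t k (h * g⁻¹)},
        ∀ h : G, f (h * g⁻¹) = f h) → g = 1) :=
  ⟨finite_span_translates t q (coordinate_mul_eq_eval hmal.1.2 ht hq),
    fun g _ hf => translate_mem_span_translates t g hf,
    fun _ hg => eq_one_of_forall_translate_eq t (coordinates_injective hmal.1.2 ht) hg⟩
end
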